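/- arXiv:2004.01128 — 4 statements merged into one kernel-verified Lean document; each statement's English description precedes it below -/
import Mathlib

section
/- Let B = (e_n) be a partially-greedy basis of a quasi-Banach space (X, ‖·‖). Then there exists a quasi-norm ‖·‖₀ on X equivalent to ‖·‖ (i.e., c‖f‖ ≤ ‖f‖₀ ≤ C‖f‖ for some constants 0 < c ≤ C and all f) with respect to which B is 1-partially-greedy, that is, ‖f − P_A(f)‖₀ ≤ inf_{k ≤ |A|}‖f − S_k(f)‖₀ for every f ∈ X and every finite greedy set A of f. -/
open Finset

noncomputable section

namespace GreedyQB

/-- The constant `A_p = (2^p - 1)^{-1/p}`. -/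
def Ap (p : ℝ) : ℝ := (2 ^ p - 1) ^ (-1 / p)

/-- The constant `B_p`, equal to `2^{1/p} A_p` for real scalars and `4^{1/p} A_p`
for complex scalars. -/
def Bp (𝕜 : Type*) [RCLike 𝕜] (p : ℝ) : ℝ :=
  if (RCLike.I : 𝕜) = 0 then 2 ^ (1 / p) * Ap p else 4 ^ (1 / p) * Ap p

/-- `η_p(u) = min_{0<t<1} (1-t^p)^{-1/p} (1-(1+A_p⁻¹ u⁻¹ t)^{-p})^{-1/p}`. -/
def eta (p u : ℝ) : ℝ :=
  sInf ((fun t : ℝ => (1 - t ^ p) ^ (-1 / p) *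
    (1 - (1 + (Ap p)⁻¹ * u⁻¹ * t) ^ (-p)) ^ (-1 / p)) '' Set.Ioo (0 : ℝ) 1)

variable {𝕜 X : Type*} [RCLike 𝕜] [AddCommGroup X] [Module 𝕜 X]

/-- A quasi-norm on a vector space `X` over `𝕜`. -/
structure IsQuasiNorm (𝕜 : Type*) [RCLike 𝕜] {X : Type*} [AddCommGroup X]
    [Module 𝕜 X] (q : X → ℝ) : Prop where
  pos : ∀ f : X, f ≠ 0 → 0 < q f
  hom : ∀ (t : 𝕜) (f : X), q (t • f) = ‖t‖ * q f
  quasi : ∃ κ : ℝ, 1 ≤ κ ∧ ∀ f g : X, q (f + g) ≤ κ * (q f + q g)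

/-- A `p`-norm on a vector space `X` over `𝕜`. -/
structure IsPNorm (𝕜 : Type*) [RCLike 𝕜] {X : Type*} [AddCommGroup X]
    [Module 𝕜 X] (p : ℝ) (q : X → ℝ) : Prop where
  pos : ∀ f : X, f ≠ 0 → 0 < q f
  hom : ∀ (t : 𝕜) (f : X), q (t • f) = ‖t‖ * q f
  ptri : ∀ f g : X, q (f + g) ^ p ≤ q f ^ p + q g ^ p

/-- `(e n)` is a (semi-normalized, total, biorthogonal) basis with coordinate
functionals `(c n)` on the space with quasi-norm `q`. -/
structure IsBasis (q : X → ℝ) (e : ℕ → X) (c : ℕ → X →ₗ[𝕜] 𝕜) : Prop where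
  biorth : ∀ n m, c n (e m) = if n = m then (1 : 𝕜) else 0
  total : ∀ f : X, (∀ n, c n f = 0) → f = 0
  semin : ∃ M : ℝ, ∀ n : ℕ, q (e n) ≤ M ∧ ∀ f : X, ‖c n f‖ ≤ M * q f

/-- The projection `P_A(f) = ∑_{n ∈ A} e_n^*(f) e_n`. -/
def proj (c : ℕ → X →ₗ[𝕜] 𝕜) (e : ℕ → X) (A : Finset ℕ) (f : X) : X :=
  ∑ n ∈ A, c n f • e n

/-- The partial sum operator `S_k`: projection onto the first `k` basis vectors. -/
def psum (c : ℕ → X →ₗ[𝕜] 𝕜) (e : ℕ → X) (k : ℕ) (f : X) : X :=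
  proj c e (Finset.range k) f

/-- The indicator sum `1_{εA} = ∑_{n ∈ A} ε_n e_n`. -/
def indSum (e : ℕ → X) (ε : ℕ → 𝕜) (A : Finset ℕ) : X :=
  ∑ n ∈ A, ε n • e n

/-- `ε` is a collection of signs on `A`. -/
def IsSign (ε : ℕ → 𝕜) (A : Finset ℕ) : Prop := ∀ n ∈ A, ‖ε n‖ = 1

/-- `A` is a greedy set of `f`: coefficients on `A` dominate those outside `A`. -/
def GreedySet (c : ℕ → X →ₗ[𝕜] 𝕜) (f : X) (A : Finset ℕ) : Prop :=
  ∀ n ∈ A, ∀ m ∉ A, ‖c m f‖ ≤ ‖c n f‖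

/-- The basis is `C`-partially-greedy:
`‖f - P_A f‖ ≤ C inf_{k ≤ |A|} ‖f - S_k f‖` for every greedy set `A` of `f`. -/
def PartiallyGreedy (q : X → ℝ) (e : ℕ → X) (c : ℕ → X →ₗ[𝕜] 𝕜) (C : ℝ) : Prop :=
  ∀ (f : X) (A : Finset ℕ), GreedySet c f A →
    ∀ k ≤ A.card, q (f - proj c e A f) ≤ C * q (f - psum c e k f)

/-- The basis is `C`-quasi-greedy. -/
def QuasiGreedy (q : X → ℝ) (e : ℕ → X) (c : ℕ → X →ₗ[𝕜] 𝕜) (C : ℝ) : Prop :=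
  ∀ (f : X) (A : Finset ℕ), GreedySet c f A → q (proj c e A f) ≤ C * q f

/-- The basis is `C`-quasi-greedy for largest coefficients. -/
def QGLC (q : X → ℝ) (e : ℕ → X) (c : ℕ → X →ₗ[𝕜] 𝕜) (C : ℝ) : Prop :=
  ∀ (A : Finset ℕ) (ε : ℕ → 𝕜) (f : X), IsSign ε A →
    (∀ n ∈ A, c n f = 0) → (∀ n, ‖c n f‖ ≤ 1) →
    q (indSum e ε A) ≤ C * q (f + indSum e ε A)

/-- The basis is `Δ`-partially-symmetric for largest coefficients. -/
def PSLC (q : X → ℝ) (e : ℕ → X) (c : ℕ → X →ₗ[𝕜] 𝕜) (Δ : ℝ) : Prop :=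
  ∀ (A B : Finset ℕ) (ε ε' : ℕ → 𝕜) (f : X),
    IsSign ε A → IsSign ε' B → A.card ≤ B.card →
    (∀ n, ‖c n f‖ ≤ 1) →
    (∀ a ∈ A, ∀ n, c n f ≠ 0 → a < n) →
    (∀ a ∈ A, ∀ b ∈ B, a < b) →
    (∀ b ∈ B, c b f = 0) →
    q (f + indSum e ε A) ≤ Δ * q (f + indSum e ε' B)

/-- The basis is `Δ`-super-conservative. -/
def SuperConservative (q : X → ℝ) (e : ℕ → X) (c : ℕ → X →ₗ[𝕜] 𝕜) (Δ : ℝ) : Prop :=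
  ∀ (A B : Finset ℕ) (ε ε' : ℕ → 𝕜), IsSign ε A → IsSign ε' B →
    A.card ≤ B.card → (∀ a ∈ A, ∀ b ∈ B, a < b) →
    q (indSum e ε A) ≤ Δ * q (indSum e ε' B)

/-- The basis is `Δ`-conservative. -/
def Conservative (q : X → ℝ) (e : ℕ → X) (Δ : ℝ) : Prop :=
  ∀ A B : Finset ℕ, A.card ≤ B.card → (∀ a ∈ A, ∀ b ∈ B, a < b) →
    q (∑ n ∈ A, e n) ≤ Δ * q (∑ n ∈ B, e n)

/-- The sign of a scalar, `sgn t = t / |t|` (with `sgn 0 = 1`). -/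
def sgn (𝕜 : Type*) [RCLike 𝕜] (t : 𝕜) : 𝕜 := if t = 0 then 1 else (‖t‖ : 𝕜)⁻¹ * t

/-- `min_{n ∈ A} |e_n^*(f)|`. -/
def minCoeff (c : ℕ → X →ₗ[𝕜] 𝕜) (f : X) (A : Finset ℕ) : ℝ :=
  sInf ((fun n => ‖c n f‖) '' (A : Set ℕ))

/-- The restricted truncation operator
`U(f,A) = (min_{n∈A} |e_n^*(f)|) ∑_{n∈A} sgn(e_n^*(f)) e_n`. -/
def restrTrunc (e : ℕ → X) (c : ℕ → X →ₗ[𝕜] 𝕜) (f : X) (A : Finset ℕ) : X :=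
  ((minCoeff c f A : ℝ) : 𝕜) • ∑ n ∈ A, sgn 𝕜 (c n f) • e n

/-- The truncation operator `T(f,A) = U(f,A) + P_{A^c}(f)`. -/
def trunc (e : ℕ → X) (c : ℕ → X →ₗ[𝕜] 𝕜) (f : X) (A : Finset ℕ) : X :=
  restrTrunc e c f A + (f - proj c e A f)

/-- `(k, z) ∈ D(f)`: `supp z` is finite, `k < min (supp z)`,
`supp z ∩ supp f = ∅`, `k ≤ |supp z|`, and
`max_{n ∈ supp f} |e_n^*(f)| ≤ min_{n ∈ supp z} |e_n^*(z)|`. -/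
def Dmem (c : ℕ → X →ₗ[𝕜] 𝕜) (f z : X) (k : ℕ) : Prop :=
  {n | c n z ≠ 0}.Finite ∧ (∀ n, c n z ≠ 0 → k ≤ n) ∧
  (∀ n, c n z ≠ 0 → c n f = 0) ∧ k ≤ {n | c n z ≠ 0}.ncard ∧
  (∀ n m, c m z ≠ 0 → ‖c n f‖ ≤ ‖c m z‖)

/-- The quantity `‖f‖_a = inf { ‖f - S_k f + z‖ : (k,z) ∈ D(f) }`. -/
def qa (q : X → ℝ) (e : ℕ → X) (c : ℕ → X →ₗ[𝕜] 𝕜) (f : X) : ℝ :=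
  sInf {y : ℝ | ∃ (z : X) (k : ℕ), Dmem c f z k ∧ y = q (f - psum c e k f + z)}

open scoped Pointwise

-- ====================== auxiliary lemmas ======================

section AuxCoeff

variable {q : X → ℝ} {e : ℕ → X} {c : ℕ → X →ₗ[𝕜] 𝕜}

lemma aux_coeff_sum (hb : IsBasis q e c) (Z : Finset ℕ) (ζ : ℕ → 𝕜) (m : ℕ) :
    c m (∑ n ∈ Z, ζ n • e n) = if m ∈ Z then ζ m else 0 := by
  rw [map_sum]
  have h1 : ∀ n ∈ Z, c m (ζ n • e n) = if m = n then ζ n else 0 := by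
    intro n _
    rw [map_smul, hb.biorth m n]
    by_cases h : m = n <;> simp [h]
  rw [Finset.sum_congr rfl h1, Finset.sum_ite_eq]

lemma aux_coeff_proj (hb : IsBasis q e c) (A : Finset ℕ) (f : X) (m : ℕ) :
    c m (proj c e A f) = if m ∈ A then c m f else 0 :=
  aux_coeff_sum hb A (fun n => c n f) m

lemma aux_coeff_psum (hb : IsBasis q e c) (k : ℕ) (f : X) (m : ℕ) :
    c m (psum c e k f) = if m < k then c m f else 0 := by
  rw [psum, aux_coeff_proj hb]
  simp [Finset.mem_range]

lemma aux_coeff_tail (hb : IsBasis q e c) (k : ℕ) (f : X) (m : ℕ) :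
    c m (f - psum c e k f) = if k ≤ m then c m f else 0 := by
  rw [map_sub, aux_coeff_psum hb]
  by_cases h : m < k
  · simp [h, Nat.not_le_of_lt h]
  · simp [h, Nat.le_of_not_lt h]

lemma aux_coeff_gproj (hb : IsBasis q e c) (A : Finset ℕ) (f : X) (m : ℕ) :
    c m (f - proj c e A f) = if m ∈ A then 0 else c m f := by
  rw [map_sub, aux_coeff_proj hb]
  by_cases h : m ∈ A <;> simp [h]

lemma aux_ext (hb : IsBasis q e c) {x y : X} (h : ∀ n, c n x = c n y) : x = y := by
  have : x - y = 0 := hb.total _ (fun n => by rw [map_sub, h n, sub_self])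
  exact sub_eq_zero.mp this

end AuxCoeff

section AuxQ

variable {q : X → ℝ} {e : ℕ → X} {c : ℕ → X →ₗ[𝕜] 𝕜}

lemma aux_q_zero (hq : IsQuasiNorm 𝕜 q) : q (0 : X) = 0 := by
  have := hq.hom (0 : 𝕜) (0 : X)
  simpa using this

lemma aux_q_nonneg (hq : IsQuasiNorm 𝕜 q) (x : X) : 0 ≤ q x := by
  by_cases h : x = 0
  · rw [h, aux_q_zero hq]
  · exact le_of_lt (hq.pos x h)

lemma aux_q_neg (hq : IsQuasiNorm 𝕜 q) (x : X) : q (-x) = q x := by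
  have := hq.hom (-1 : 𝕜) x
  simpa using this

lemma aux_q_sub {κ : ℝ} (hq : IsQuasiNorm 𝕜 q)
    (hκ : ∀ f g : X, q (f + g) ≤ κ * (q f + q g)) (x y : X) :
    q (x - y) ≤ κ * (q x + q y) := by
  have := hκ x (-y)
  rwa [aux_q_neg hq y, ← sub_eq_add_neg] at this

end AuxQ

-- ====================== the witness class ======================

open scoped Classical in
/-- Witness predicate: `(k, Z, T, ζ)` is a good witness for `f`. -/
def Wit (c : ℕ → X →ₗ[𝕜] 𝕜) (f : X) (k : ℕ) (Z T : Finset ℕ) (ζ : ℕ → 𝕜) : Prop :=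
  T ⊆ Z ∧ (∀ m ∈ T, k ≤ m) ∧
  (∀ m ∈ Z, k ≤ m → c m f = 0) ∧
  (∀ m ∈ Z, ∀ n, k ≤ n → ‖c n f‖ ≤ ‖ζ m‖) ∧
  (∀ n, n < k → c n f ≠ 0 → ∀ m ∈ T, ‖c n f‖ ≤ ‖ζ m‖) ∧
  ((Finset.range k).filter (fun n => c n f ≠ 0)).card ≤ T.card ∧
  (∀ m ∈ T, ∀ m' ∈ Z, m' ∉ T → ‖ζ m‖ ≤ ‖ζ m'‖)

/-- The witness value set. -/
def WSet (q : X → ℝ) (e : ℕ → X) (c : ℕ → X →ₗ[𝕜] 𝕜) (f : X) : Set ℝ :=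
  {v | ∃ (k : ℕ) (Z T : Finset ℕ) (ζ : ℕ → 𝕜), Wit c f k Z T ζ ∧
    v = q (f - psum c e k f + ∑ m ∈ Z, ζ m • e m)}

section WSetBasic

variable {q : X → ℝ} {e : ℕ → X} {c : ℕ → X →ₗ[𝕜] 𝕜}

lemma aux_self_mem (q : X → ℝ) (e : ℕ → X) (c : ℕ → X →ₗ[𝕜] 𝕜) (f : X) :
    q f ∈ WSet q e c f := by
  refine ⟨0, ∅, ∅, 0, ⟨?_, ?_, ?_, ?_, ?_, ?_, ?_⟩, ?_⟩
  · exact Finset.Subset.refl _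
  · intro m hm; exact absurd hm (Finset.notMem_empty m)
  · intro m hm; exact absurd hm (Finset.notMem_empty m)
  · intro m hm; exact absurd hm (Finset.notMem_empty m)
  · intro n _ _ m hm; exact absurd hm (Finset.notMem_empty m)
  · simp
  · intro m hm; exact absurd hm (Finset.notMem_empty m)
  · simp [psum, proj]

lemma aux_WSet_nonneg (hq : IsQuasiNorm 𝕜 q) {f : X} {v : ℝ}
    (hv : v ∈ WSet q e c f) : 0 ≤ v := by
  obtain ⟨k, Z, T, ζ, _, rfl⟩ := hv
  exact aux_q_nonneg hq _

lemma aux_WSet_nonempty (q : X → ℝ) (e : ℕ → X) (c : ℕ → X →ₗ[𝕜] 𝕜) (f : X) :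
    (WSet q e c f).Nonempty := ⟨q f, aux_self_mem q e c f⟩

lemma aux_WSet_bdd (hq : IsQuasiNorm 𝕜 q) (f : X) :
    BddBelow (WSet q e c f) := ⟨0, fun v hv => aux_WSet_nonneg hq hv⟩

end WSetBasic

-- ====================== boundedness ======================

section Bound

variable {q : X → ℝ} {e : ℕ → X} {c : ℕ → X →ₗ[𝕜] 𝕜}

lemma aux_coeff_ones (hb : IsBasis q e c) (S : Finset ℕ) (m : ℕ) :
    c m (∑ n ∈ S, e n) = if m ∈ S then 1 else 0 := by
  have h : (∑ n ∈ S, e n) = ∑ n ∈ S, (1 : 𝕜) • e n := by simp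
  rw [h, aux_coeff_sum hb]

lemma aux_bound (hq : IsQuasiNorm 𝕜 q) (hb : IsBasis q e c)
    {κ : ℝ} (hκ1 : 1 ≤ κ) (hκ : ∀ f g : X, q (f + g) ≤ κ * (q f + q g))
    {Cpg : ℝ} (hCpg : 0 < Cpg) (hpg : PartiallyGreedy q e c Cpg)
    {f : X} {v : ℝ} (hv : v ∈ WSet q e c f) :
    q f ≤ (κ * Cpg * (1 + 2 * κ * Cpg)) * v := by
  classical
  obtain ⟨k, Z, T, ζ, ⟨hTZ, hTk, hβ, hγ, hζ', hη, hε⟩, rfl⟩ := hv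
  set F : X := f - psum c e k f + ∑ m ∈ Z, ζ m • e m with hF
  have hqF : 0 ≤ q F := aux_q_nonneg hq F
  -- coefficients of F
  have hcF : ∀ n, c n F =
      (if k ≤ n then c n f else 0) + (if n ∈ Z then ζ n else 0) := by
    intro n
    rw [hF, map_add, aux_coeff_tail hb, aux_coeff_sum hb]
  have hcFZ : ∀ n ∈ Z, c n F = ζ n := by
    intro n hn
    rw [hcF n, if_pos hn]
    by_cases h : k ≤ n
    · rw [if_pos h, hβ n hn h, zero_add]
    · rw [if_neg h, zero_add]
  have hcFnZ : ∀ n, n ∉ Z → c n F = if k ≤ n then c n f else 0 := by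
    intro n hn; rw [hcF n, if_neg hn, add_zero]
  -- greedy sets
  have hgZ : GreedySet c F Z := by
    intro n hn m hm
    rw [hcFZ n hn, hcFnZ m hm]
    by_cases h : k ≤ m
    · rw [if_pos h]; exact hγ n hn m h
    · rw [if_neg h]; simpa using norm_nonneg _
  have hgZT : GreedySet c F (Z \ T) := by
    intro n hn m hm
    obtain ⟨hnZ, hnT⟩ := Finset.mem_sdiff.mp hn
    rw [hcFZ n hnZ]
    by_cases hmZ : m ∈ Z
    · have hmT : m ∈ T := by
        by_contra hmT
        exact hm (Finset.mem_sdiff.mpr ⟨hmZ, hmT⟩)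
      rw [hcFZ m hmZ]
      exact hε m hmT n hnZ hnT
    · rw [hcFnZ m hmZ]
      by_cases h : k ≤ m
      · rw [if_pos h]; exact hγ n hnZ m h
      · rw [if_neg h]; simpa using norm_nonneg _
  -- projection identities
  have hprojZ : proj c e Z F = ∑ m ∈ Z, ζ m • e m := by
    unfold proj
    exact Finset.sum_congr rfl (fun n hn => by rw [hcFZ n hn])
  have hidZ : F - proj c e Z F = f - psum c e k f := by
    rw [hprojZ, hF, add_sub_cancel_right]
  have hprojZT : proj c e (Z \ T) F = ∑ m ∈ Z \ T, ζ m • e m := by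
    unfold proj
    exact Finset.sum_congr rfl
      (fun n hn => by rw [hcFZ n (Finset.mem_sdiff.mp hn).1])
  have hidZT : F - proj c e (Z \ T) F
      = (f - psum c e k f) + ∑ m ∈ T, ζ m • e m := by
    rw [hprojZT, hF]
    have hsp : (∑ m ∈ Z \ T, ζ m • e m) + ∑ m ∈ T, ζ m • e m
        = ∑ m ∈ Z, ζ m • e m := Finset.sum_sdiff hTZ
    rw [← hsp]
    abel
  have hpsum0 : psum c e 0 F = 0 := by simp [psum, proj]
  -- step 1
  have step1 : q (f - psum c e k f) ≤ Cpg * q F := by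
    have h := hpg F Z hgZ 0 (Nat.zero_le _)
    rwa [hidZ, hpsum0, sub_zero] at h
  -- step 2
  have step2 : q ((f - psum c e k f) + ∑ m ∈ T, ζ m • e m) ≤ Cpg * q F := by
    have h := hpg F (Z \ T) hgZT 0 (Nat.zero_le _)
    rwa [hidZT, hpsum0, sub_zero] at h
  have stepT : q (∑ m ∈ T, ζ m • e m) ≤ κ * (Cpg * q F + Cpg * q F) := by
    have hid : (∑ m ∈ T, ζ m • e m)
        = ((f - psum c e k f) + ∑ m ∈ T, ζ m • e m) - (f - psum c e k f) := by
      rw [add_sub_cancel_left]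
    rw [hid]
    calc q (((f - psum c e k f) + ∑ m ∈ T, ζ m • e m) - (f - psum c e k f))
        ≤ κ * (q ((f - psum c e k f) + ∑ m ∈ T, ζ m • e m) + q (f - psum c e k f)) :=
          aux_q_sub hq hκ _ _
      _ ≤ κ * (Cpg * q F + Cpg * q F) := by
          apply mul_le_mul_of_nonneg_left _ (le_trans zero_le_one hκ1)
          exact add_le_add step2 step1
  -- case analysis on T
  by_cases hT : T = ∅
  · -- heads are empty, so psum k f = 0
    have hheads : ((Finset.range k).filter (fun n => c n f ≠ 0)) = ∅ := by
      rw [hT] at hη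
      simp only [Finset.card_empty, Nat.le_zero, Finset.card_eq_zero] at hη
      exact hη
    have hz : ∀ n, n < k → c n f = 0 := by
      intro n hn
      by_contra h
      have hmem : n ∈ (Finset.range k).filter (fun n => c n f ≠ 0) :=
        Finset.mem_filter.mpr ⟨Finset.mem_range.mpr hn, h⟩
      rw [hheads] at hmem
      exact absurd hmem (Finset.notMem_empty n)
    have hps : psum c e k f = 0 := by
      unfold psum proj
      apply Finset.sum_eq_zero
      intro n hn
      rw [hz n (Finset.mem_range.mp hn), zero_smul]
    have hqf : q f = q (f - psum c e k f) := by rw [hps, sub_zero]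
    rw [hqf]
    calc q (f - psum c e k f) ≤ Cpg * q F := step1
      _ ≤ (κ * Cpg * (1 + 2 * κ * Cpg)) * q F := by
          have hfac : Cpg ≤ κ * Cpg * (1 + 2 * κ * Cpg) := by
            nlinarith [mul_nonneg (sub_nonneg.mpr hκ1) hCpg.le,
              mul_pos hCpg hCpg, mul_pos (mul_pos (lt_of_lt_of_le zero_lt_one hκ1) hCpg) (mul_pos (lt_of_lt_of_le zero_lt_one hκ1) hCpg)]
          exact mul_le_mul_of_nonneg_right hfac hqF
  · have hTne : T.Nonempty := Finset.nonempty_iff_ne_empty.mpr hT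
    set M : ℝ := T.inf' hTne (fun m => ‖ζ m‖) with hM
    obtain ⟨m₀, hm₀T, hMm₀⟩ := Finset.exists_mem_eq_inf' hTne (fun m => ‖ζ m‖)
    have hM0 : 0 ≤ M := by rw [hM, hMm₀]; exact norm_nonneg _
    have hMle : ∀ m ∈ T, M ≤ ‖ζ m‖ := fun m hm => Finset.inf'_le _ hm
    set FK : Finset ℕ := (Finset.range k).filter (fun n => c n f = 0) with hFK
    set V : X := psum c e k f + ((M : 𝕜)) • (∑ n ∈ FK, e n) + ∑ m ∈ T, ζ m • e m
      with hV
    have hMnorm : ‖((M : ℝ) : 𝕜)‖ = M := by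
      rw [RCLike.norm_ofReal, abs_of_nonneg hM0]
    have hcV : ∀ j, c j V = (if j < k then c j f else 0)
        + (if j ∈ FK then ((M : ℝ) : 𝕜) else 0) + (if j ∈ T then ζ j else 0) := by
      intro j
      rw [hV, map_add, map_add, aux_coeff_psum hb, map_smul, aux_coeff_ones hb,
        aux_coeff_sum hb, smul_eq_mul]
      congr 2
      by_cases h : j ∈ FK <;> simp [h]
    have hTk' : ∀ j ∈ T, ¬ j < k := fun j hj => Nat.not_lt.mpr (hTk j hj)
    have hFKT : ∀ j ∈ FK, j ∉ T := by
      intro j hj hjT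
      exact (hTk' j hjT) (Finset.mem_range.mp (Finset.mem_filter.mp hj).1)
    have hcVFK : ∀ j ∈ FK, c j V = ((M : ℝ) : 𝕜) := by
      intro j hj
      have h1 : j < k := Finset.mem_range.mp (Finset.mem_filter.mp hj).1
      have h2 : c j f = 0 := (Finset.mem_filter.mp hj).2
      rw [hcV j, if_pos h1, h2, if_pos hj, if_neg (hFKT j hj), add_zero, zero_add]
    have hcVT : ∀ j ∈ T, c j V = ζ j := by
      intro j hj
      have h2 : j ∉ FK := fun h => hFKT j h hj
      rw [hcV j, if_neg (hTk' j hj), if_neg h2, if_pos hj, add_zero, zero_add]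
    have hcVo : ∀ j, j ∉ FK → j ∉ T → c j V = if j < k then c j f else 0 := by
      intro j h1 h2
      rw [hcV j, if_neg h1, if_neg h2, add_zero, add_zero]
    set B : Finset ℕ := FK ∪ T with hB
    have hdisj : Disjoint FK T := Finset.disjoint_left.mpr hFKT
    have hgV : GreedySet c V B := by
      intro n hn m hm
      have hmFK : m ∉ FK := fun h => hm (Finset.mem_union_left _ h)
      have hmT : m ∉ T := fun h => hm (Finset.mem_union_right _ h)
      rw [hcVo m hmFK hmT]
      have hmb : ‖(if m < k then c m f else 0 : 𝕜)‖ ≤ M := by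
        by_cases h : m < k
        · rw [if_pos h]
          by_cases h0 : c m f = 0
          · rw [h0]; simpa using hM0
          · rw [hM, hMm₀]; exact hζ' m h h0 m₀ hm₀T
        · rw [if_neg h]; simpa using hM0
      rcases Finset.mem_union.mp hn with hnF | hnT
      · rw [hcVFK n hnF, hMnorm]; exact hmb
      · rw [hcVT n hnT]; exact le_trans hmb (hMle n hnT)
    have hcard : k ≤ B.card := by
      have hpart := Finset.card_filter_add_card_filter_not
        (s := Finset.range k) (p := fun n => c n f ≠ 0)
      have hFKeq : (Finset.range k).filter (fun n => ¬ c n f ≠ 0) = FK := by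
        apply Finset.filter_congr
        intro n _
        simp [hFK]
      rw [hFKeq, Finset.card_range] at hpart
      have hBcard : B.card = FK.card + T.card := Finset.card_union_of_disjoint hdisj
      omega
    have hidV1 : V - proj c e B V = psum c e k f := by
      apply aux_ext hb
      intro j
      rw [map_sub, aux_coeff_proj hb, aux_coeff_psum hb]
      by_cases hj : j ∈ B
      · rw [if_pos hj, sub_self]
        rcases Finset.mem_union.mp hj with hjF | hjT
        · have h2 : c j f = 0 := (Finset.mem_filter.mp hjF).2
          simp [h2]
        · rw [if_neg (hTk' j hjT)]
      · rw [if_neg hj, sub_zero,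
          hcVo j (fun h => hj (Finset.mem_union_left _ h))
            (fun h => hj (Finset.mem_union_right _ h))]
    have hidV2 : V - psum c e k V = ∑ m ∈ T, ζ m • e m := by
      apply aux_ext hb
      intro j
      rw [map_sub, aux_coeff_psum hb, aux_coeff_sum hb]
      by_cases hj : j < k
      · have hjT : j ∉ T := fun h => (hTk' j h) hj
        simp [hj, hjT]
      · have hjFK : j ∉ FK :=
          fun h => hj (Finset.mem_range.mp (Finset.mem_filter.mp h).1)
        rw [if_neg hj, sub_zero, hcV j, if_neg hj, if_neg hjFK, zero_add, zero_add]
    have step3 : q (psum c e k f) ≤ Cpg * q (∑ m ∈ T, ζ m • e m) := by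
      have h := hpg V B hgV k hcard
      rwa [hidV1, hidV2] at h
    have hfs : f = (f - psum c e k f) + psum c e k f := by abel
    calc q f = q ((f - psum c e k f) + psum c e k f) := by rw [← hfs]
      _ ≤ κ * (q (f - psum c e k f) + q (psum c e k f)) := hκ _ _
      _ ≤ κ * (Cpg * q F + Cpg * (κ * (Cpg * q F + Cpg * q F))) := by
          apply mul_le_mul_of_nonneg_left _ (le_trans zero_le_one hκ1)
          apply add_le_add step1
          exact le_trans step3 (mul_le_mul_of_nonneg_left stepT hCpg.le)
      _ = (κ * Cpg * (1 + 2 * κ * Cpg)) * q F := by ring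

end Bound

-- ====================== transitivity ======================

section Trans

variable {q : X → ℝ} {e : ℕ → X} {c : ℕ → X →ₗ[𝕜] 𝕜}

lemma aux_trans (hq : IsQuasiNorm 𝕜 q) (hb : IsBasis q e c)
    {f : X} {A : Finset ℕ} (hA : GreedySet c f A) {k : ℕ} (hk : k ≤ A.card)
    {v : ℝ} (hv : v ∈ WSet q e c (f - psum c e k f)) :
    ∃ v' ∈ WSet q e c (f - proj c e A f), v' ≤ v := by
  classical
  have hcg : ∀ n, c n (f - proj c e A f) = if n ∈ A then 0 else c n f :=
    fun n => aux_coeff_gproj hb A f n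
  have hch : ∀ n, c n (f - psum c e k f) = if k ≤ n then c n f else 0 :=
    fun n => aux_coeff_tail hb k f n
  by_cases hdeg : ∃ a ∈ A, c a f = 0
  · obtain ⟨a, haA, ha0⟩ := hdeg
    have hg0 : f - proj c e A f = 0 := by
      apply hb.total
      intro n
      rw [hcg n]
      by_cases hn : n ∈ A
      · rw [if_pos hn]
      · rw [if_neg hn]
        have hle := hA a haA n hn
        rw [ha0, norm_zero] at hle
        exact norm_eq_zero.mp (le_antisymm hle (norm_nonneg _))
    refine ⟨q (f - proj c e A f), aux_self_mem q e c _, ?_⟩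
    rw [hg0, aux_q_zero hq]
    exact aux_WSet_nonneg hq hv
  · push_neg at hdeg
    obtain ⟨k', Z, T, ζ, ⟨hTZ, hTk, hβ, hγ, hζ', hη, hε⟩, rfl⟩ := hv
    have hAKZ : ∀ K : ℕ, k ≤ K → k' ≤ K →
        ∀ m ∈ A.filter (fun a => K ≤ a), m ∉ Z := by
      intro K hkK hk'K m hm hmZ
      obtain ⟨hmA, hKm⟩ := Finset.mem_filter.mp hm
      have h0 : c m (f - psum c e k f) = 0 := hβ m hmZ (le_trans hk'K hKm)
      rw [hch m, if_pos (le_trans hkK hKm)] at h0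
      exact hdeg m hmA h0
    have key : ∀ K : ℕ, (∀ n, K ≤ n ↔ (k ≤ n ∧ k' ≤ n)) →
        (f - proj c e A f) - psum c e K (f - proj c e A f)
          + ∑ m ∈ (Z ∪ A.filter (fun a => K ≤ a)),
            (if m ∈ A.filter (fun a => K ≤ a) then c m f else ζ m) • e m
        = (f - psum c e k f) - psum c e k' (f - psum c e k f)
          + ∑ m ∈ Z, ζ m • e m := by
      intro K hKiff
      have hkK : k ≤ K := ((hKiff K).mp le_rfl).1
      have hk'K : k' ≤ K := ((hKiff K).mp le_rfl).2
      have hAKZ' := hAKZ K hkK hk'K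
      apply aux_ext hb
      intro n
      rw [map_add, map_add, aux_coeff_tail hb K (f - proj c e A f) n,
        aux_coeff_tail hb k' (f - psum c e k f) n,
        aux_coeff_sum hb, aux_coeff_sum hb, hcg n, hch n]
      by_cases hAKn : n ∈ A.filter (fun a => K ≤ a)
      · obtain ⟨hnA, hKn⟩ := Finset.mem_filter.mp hAKn
        have hnZ : n ∉ Z := hAKZ' n hAKn
        have h1 := (hKiff n).mp hKn
        rw [if_pos hKn, if_pos hnA, if_pos (Finset.mem_union_right _ hAKn),
          if_pos hAKn, if_pos h1.2, if_pos h1.1, if_neg hnZ]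
        ring
      · by_cases hKn : K ≤ n
        · have h1 := (hKiff n).mp hKn
          have hnA : n ∉ A := fun hnA => hAKn (Finset.mem_filter.mpr ⟨hnA, hKn⟩)
          rw [if_pos hKn, if_neg hnA, if_pos h1.2, if_pos h1.1]
          by_cases hnZ : n ∈ Z
          · rw [if_pos (Finset.mem_union_left _ hnZ), if_neg hAKn, if_pos hnZ]
          · have hnU : n ∉ Z ∪ A.filter (fun a => K ≤ a) := by
              rw [Finset.mem_union]
              push_neg
              exact ⟨hnZ, hAKn⟩
            rw [if_neg hnU, if_neg hnZ]
        · rw [if_neg hKn]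
          have h2 : ¬ (k ≤ n ∧ k' ≤ n) := fun hc => hKn ((hKiff n).mpr hc)
          have hr : (if k' ≤ n then (if k ≤ n then c n f else 0) else 0) = 0 := by
            by_cases ha : k' ≤ n
            · rw [if_pos ha, if_neg (fun hbb => h2 ⟨hbb, ha⟩)]
            · rw [if_neg ha]
          rw [hr]
          by_cases hnZ : n ∈ Z
          · rw [if_pos (Finset.mem_union_left _ hnZ), if_neg hAKn, if_pos hnZ]
          · have hnU : n ∉ Z ∪ A.filter (fun a => K ≤ a) := by
              rw [Finset.mem_union]
              push_neg
              exact ⟨hnZ, hAKn⟩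
            rw [if_neg hnU, if_neg hnZ]
    rcases le_total k' k with hkk | hkk
    · -- Case K = k
      have hKiff : ∀ n, k ≤ n ↔ (k ≤ n ∧ k' ≤ n) :=
        fun n => ⟨fun hn => ⟨hn, le_trans hkk hn⟩, fun hn => hn.1⟩
      have hAKZ' := hAKZ k le_rfl hkk
      refine ⟨_, ⟨k, Z ∪ A.filter (fun a => k ≤ a), A.filter (fun a => k ≤ a),
        (fun m => if m ∈ A.filter (fun a => k ≤ a) then c m f else ζ m),
        ⟨?_, ?_, ?_, ?_, ?_, ?_, ?_⟩, rfl⟩,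
        le_of_eq (congrArg q (key k hKiff))⟩
      · exact Finset.subset_union_right
      · intro m hm
        exact (Finset.mem_filter.mp hm).2
      · -- β
        intro m hm hkm
        rcases Finset.mem_union.mp hm with hmZ | hmAK
        · have h0 : c m (f - psum c e k f) = 0 := hβ m hmZ (le_trans hkk hkm)
          rw [hch m, if_pos hkm] at h0
          rw [hcg m, h0]
          split_ifs <;> rfl
        · rw [hcg m, if_pos (Finset.mem_filter.mp hmAK).1]
      · -- γ
        intro m hm n hkn
        have hbound : ∀ w : 𝕜, (n ∉ A → ‖c n f‖ ≤ ‖w‖) →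
            ‖c n (f - proj c e A f)‖ ≤ ‖w‖ := by
          intro w hw
          rw [hcg n]
          split_ifs with hsp
          · simpa using norm_nonneg w
          · exact hw hsp
        rcases Finset.mem_union.mp hm with hmZ | hmAK
        · have hmAK : m ∉ A.filter (fun a => k ≤ a) := fun h' => hAKZ' m h' hmZ
          simp only [if_neg hmAK]
          apply hbound
          intro _
          have h1 := hγ m hmZ n (le_trans hkk hkn)
          rwa [hch n, if_pos hkn] at h1
        · simp only [if_pos hmAK]
          have hmA : m ∈ A := (Finset.mem_filter.mp hmAK).1
          apply hbound
          intro hnA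
          exact hA m hmA n hnA
      · -- head domination
        intro n hnk hne m hm
        simp only [if_pos hm]
        have hnA : n ∉ A := by
          intro hnA
          rw [hcg n, if_pos hnA] at hne
          exact hne rfl
        rw [hcg n, if_neg hnA]
        exact hA m (Finset.mem_filter.mp hm).1 n hnA
      · -- count
        have hsub : ((Finset.range k).filter
              (fun n => c n (f - proj c e A f) ≠ 0)) ∪ A.filter (fun a => a < k)
            ⊆ Finset.range k := by
          intro x hx
          rcases Finset.mem_union.mp hx with hx | hx
          · exact (Finset.mem_filter.mp hx).1
          · exact Finset.mem_range.mpr (Finset.mem_filter.mp hx).2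
        have hdis : Disjoint ((Finset.range k).filter
              (fun n => c n (f - proj c e A f) ≠ 0)) (A.filter (fun a => a < k)) := by
          rw [Finset.disjoint_left]
          intro x hx hxA
          have hxg := (Finset.mem_filter.mp hx).2
          rw [hcg x, if_pos (Finset.mem_filter.mp hxA).1] at hxg
          exact hxg rfl
        have h1 : ((Finset.range k).filter
              (fun n => c n (f - proj c e A f) ≠ 0)).card
            + (A.filter (fun a => a < k)).card ≤ k := by
          calc _ = (((Finset.range k).filter (fun n => c n (f - proj c e A f) ≠ 0))
                ∪ A.filter (fun a => a < k)).card :=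
              (Finset.card_union_of_disjoint hdis).symm
            _ ≤ (Finset.range k).card := Finset.card_le_card hsub
            _ = k := Finset.card_range k
        have h2 : (A.filter (fun a => a < k)).card
            + (A.filter (fun a => k ≤ a)).card = A.card := by
          have e1 := Finset.card_filter_add_card_filter_not
            (s := A) (p := fun a => a < k)
          have e2 : A.filter (fun a => ¬ a < k) = A.filter (fun a => k ≤ a) := by
            apply Finset.filter_congr
            intro a _
            simp [Nat.not_lt]
          rw [e2] at e1
          exact e1
        omega
      · -- bottom slice
        intro m hm m' hm' hm'T
        simp only [if_pos hm, if_neg hm'T]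
        have hm'Z : m' ∈ Z := by
          rcases Finset.mem_union.mp hm' with h' | h'
          · exact h'
          · exact absurd h' hm'T
        obtain ⟨hmA, hkm⟩ := Finset.mem_filter.mp hm
        have h1 := hγ m' hm'Z m (le_trans hkk hkm)
        rwa [hch m, if_pos hkm] at h1
    · -- Case K = k'
      have hKiff : ∀ n, k' ≤ n ↔ (k ≤ n ∧ k' ≤ n) :=
        fun n => ⟨fun hn => ⟨le_trans hkk hn, hn⟩, fun hn => hn.2⟩
      have hAKZ' := hAKZ k' hkk le_rfl
      refine ⟨_, ⟨k', Z ∪ A.filter (fun a => k' ≤ a),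
        T ∪ A.filter (fun a => k' ≤ a),
        (fun m => if m ∈ A.filter (fun a => k' ≤ a) then c m f else ζ m),
        ⟨?_, ?_, ?_, ?_, ?_, ?_, ?_⟩, rfl⟩,
        le_of_eq (congrArg q (key k' hKiff))⟩
      · exact Finset.union_subset_union hTZ (Finset.Subset.refl _)
      · intro m hm
        rcases Finset.mem_union.mp hm with hm | hm
        · exact hTk m hm
        · exact (Finset.mem_filter.mp hm).2
      · -- β
        intro m hm hkm
        rcases Finset.mem_union.mp hm with hmZ | hmAK
        · have h0 : c m (f - psum c e k f) = 0 := hβ m hmZ hkm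
          rw [hch m, if_pos (le_trans hkk hkm)] at h0
          rw [hcg m, h0]
          split_ifs <;> rfl
        · rw [hcg m, if_pos (Finset.mem_filter.mp hmAK).1]
      · -- γ
        intro m hm n hkn
        have hbound : ∀ w : 𝕜, (n ∉ A → ‖c n f‖ ≤ ‖w‖) →
            ‖c n (f - proj c e A f)‖ ≤ ‖w‖ := by
          intro w hw
          rw [hcg n]
          split_ifs with hsp
          · simpa using norm_nonneg w
          · exact hw hsp
        rcases Finset.mem_union.mp hm with hmZ | hmAK
        · have hmAK : m ∉ A.filter (fun a => k' ≤ a) := fun h' => hAKZ' m h' hmZ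
          simp only [if_neg hmAK]
          apply hbound
          intro _
          have h1 := hγ m hmZ n hkn
          rwa [hch n, if_pos (le_trans hkk hkn)] at h1
        · simp only [if_pos hmAK]
          apply hbound
          intro hnA
          exact hA m (Finset.mem_filter.mp hmAK).1 n hnA
      · -- head domination
        intro n hnk hne m hm
        have hnA : n ∉ A := by
          intro hnA
          rw [hcg n, if_pos hnA] at hne
          exact hne rfl
        have hgn : c n (f - proj c e A f) = c n f := by rw [hcg n, if_neg hnA]
        rw [hgn]
        rcases Finset.mem_union.mp hm with hmT | hmAK
        · have hmAK : m ∉ A.filter (fun a => k' ≤ a) :=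
            fun h' => hAKZ' m h' (hTZ hmT)
          simp only [if_neg hmAK]
          by_cases hkn : k ≤ n
          · -- n is an old head of f - psum k f
            have hnh : c n (f - psum c e k f) ≠ 0 := by
              rw [hch n, if_pos hkn]
              rwa [hgn] at hne
            have h1 := hζ' n hnk hnh m hmT
            rwa [hch n, if_pos hkn] at h1
          · -- n < k : chain through an element of A of index ≥ k
            by_cases hex : ∃ a ∈ A, k ≤ a
            · obtain ⟨a, haA, hka⟩ := hex
              have h1 : ‖c n f‖ ≤ ‖c a f‖ := hA a haA n hnA
              have h2 : ‖c a f‖ ≤ ‖ζ m‖ := by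
                by_cases hk'a : k' ≤ a
                · have h3 := hγ m (hTZ hmT) a hk'a
                  rwa [hch a, if_pos hka] at h3
                · have hne' : c a (f - psum c e k f) ≠ 0 := by
                    rw [hch a, if_pos hka]
                    exact hdeg a haA
                  have h3 := hζ' a (Nat.lt_of_not_le hk'a) hne' m hmT
                  rwa [hch a, if_pos hka] at h3
              exact le_trans h1 h2
            · push_neg at hex
              exfalso
              have hsub : A ⊆ Finset.range k :=
                fun a ha => Finset.mem_range.mpr (hex a ha)
              have hAk : A = Finset.range k :=
                Finset.eq_of_subset_of_card_le hsub (by rw [Finset.card_range]; exact hk)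
              apply hnA
              rw [hAk]
              exact Finset.mem_range.mpr (Nat.lt_of_not_le hkn)
        · simp only [if_pos hmAK]
          exact hA m (Finset.mem_filter.mp hmAK).1 n hnA
      · -- count
        have hHsplit := Finset.card_filter_add_card_filter_not
          (s := (Finset.range k').filter (fun n => c n (f - proj c e A f) ≠ 0))
          (p := fun n => n < k)
        set Hg := (Finset.range k').filter (fun n => c n (f - proj c e A f) ≠ 0)
          with hHgdef
        set P1 := Hg.filter (fun n => n < k) with hP1def
        set P2 := Hg.filter (fun n => ¬ n < k) with hP2def
        have hHgA : ∀ x ∈ Hg, x ∉ A := by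
          intro x hx hxA
          have hxg := (Finset.mem_filter.mp hx).2
          rw [hcg x, if_pos hxA] at hxg
          exact hxg rfl
        have h1 : P1.card + (A.filter (fun a => a < k)).card ≤ k := by
          have hsub : P1 ∪ A.filter (fun a => a < k) ⊆ Finset.range k := by
            intro x hx
            rcases Finset.mem_union.mp hx with hx | hx
            · exact Finset.mem_range.mpr (Finset.mem_filter.mp hx).2
            · exact Finset.mem_range.mpr (Finset.mem_filter.mp hx).2
          have hdis : Disjoint P1 (A.filter (fun a => a < k)) := by
            rw [Finset.disjoint_left]
            intro x hx hxA
            exact hHgA x (Finset.mem_filter.mp hx).1 (Finset.mem_filter.mp hxA).1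
          calc P1.card + (A.filter (fun a => a < k)).card
              = (P1 ∪ A.filter (fun a => a < k)).card :=
                (Finset.card_union_of_disjoint hdis).symm
            _ ≤ (Finset.range k).card := Finset.card_le_card hsub
            _ = k := Finset.card_range k
        have h2 : P2.card + (A.filter (fun a => ¬ a < k ∧ a < k')).card ≤ T.card := by
          have hsub : P2 ∪ A.filter (fun a => ¬ a < k ∧ a < k')
              ⊆ (Finset.range k').filter (fun n => c n (f - psum c e k f) ≠ 0) := by
            intro x hx
            rcases Finset.mem_union.mp hx with hx | hx
            · obtain ⟨hx1, hx2⟩ := Finset.mem_filter.mp hx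
              obtain ⟨hxr, hxg⟩ := Finset.mem_filter.mp hx1
              refine Finset.mem_filter.mpr ⟨hxr, ?_⟩
              rw [hch x, if_pos (Nat.le_of_not_lt hx2)]
              rw [hcg x, if_neg (hHgA x hx1)] at hxg
              exact hxg
            · obtain ⟨hxA, hx2, hx3⟩ := Finset.mem_filter.mp hx
              refine Finset.mem_filter.mpr ⟨Finset.mem_range.mpr hx3, ?_⟩
              rw [hch x, if_pos (Nat.le_of_not_lt hx2)]
              exact hdeg x hxA
          have hdis : Disjoint P2 (A.filter (fun a => ¬ a < k ∧ a < k')) := by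
            rw [Finset.disjoint_left]
            intro x hx hxA
            exact hHgA x (Finset.mem_filter.mp hx).1 (Finset.mem_filter.mp hxA).1
          calc P2.card + (A.filter (fun a => ¬ a < k ∧ a < k')).card
              = (P2 ∪ A.filter (fun a => ¬ a < k ∧ a < k')).card :=
                (Finset.card_union_of_disjoint hdis).symm
            _ ≤ ((Finset.range k').filter
                  (fun n => c n (f - psum c e k f) ≠ 0)).card :=
                Finset.card_le_card hsub
            _ ≤ T.card := hη
        have h3 : (A.filter (fun a => a < k)).card
            + ((A.filter (fun a => ¬ a < k ∧ a < k')).card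
              + (A.filter (fun a => k' ≤ a)).card) = A.card := by
          have e1 := Finset.card_filter_add_card_filter_not
            (s := A) (p := fun a => a < k)
          have e2 := Finset.card_filter_add_card_filter_not
            (s := A.filter (fun a => ¬ a < k)) (p := fun a => a < k')
          have e3 : (A.filter (fun a => ¬ a < k)).filter (fun a => a < k')
              = A.filter (fun a => ¬ a < k ∧ a < k') := by
            rw [Finset.filter_filter]
          have e4 : (A.filter (fun a => ¬ a < k)).filter (fun a => ¬ a < k')
              = A.filter (fun a => k' ≤ a) := by
            rw [Finset.filter_filter]
            apply Finset.filter_congr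
            intro a _
            constructor
            · rintro ⟨_, h2'⟩
              exact Nat.le_of_not_lt h2'
            · intro h'
              exact ⟨Nat.not_lt_of_le (le_trans hkk h'), Nat.not_lt_of_le h'⟩
          rw [e3, e4] at e2
          omega
        have hTdis : Disjoint T (A.filter (fun a => k' ≤ a)) := by
          rw [Finset.disjoint_left]
          intro x hx hxA
          exact hAKZ' x hxA (hTZ hx)
        have hTAK : (T ∪ A.filter (fun a => k' ≤ a)).card
            = T.card + (A.filter (fun a => k' ≤ a)).card :=
          Finset.card_union_of_disjoint hTdis
        omega
      · -- bottom slice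
        intro m hm m' hm' hm'T
        have hm'Z : m' ∈ Z := by
          rcases Finset.mem_union.mp hm' with h' | h'
          · exact h'
          · exact absurd (Finset.mem_union_right T h') hm'T
        have hm'AK : m' ∉ A.filter (fun a => k' ≤ a) :=
          fun h' => hAKZ' m' h' hm'Z
        simp only [if_neg hm'AK]
        rcases Finset.mem_union.mp hm with hmT | hmAK
        · have hmAK : m ∉ A.filter (fun a => k' ≤ a) :=
            fun h' => hAKZ' m h' (hTZ hmT)
          simp only [if_neg hmAK]
          exact hε m hmT m' hm'Z (fun h' => hm'T (Finset.mem_union_left _ h'))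
        · simp only [if_pos hmAK]
          obtain ⟨hmA, hk'm⟩ := Finset.mem_filter.mp hmAK
          have h1 := hγ m' hm'Z m hk'm
          rwa [hch m, if_pos (le_trans hkk hk'm)] at h1


end Trans

-- ====================== scaling ======================

section Smul

variable {q : X → ℝ} {e : ℕ → X} {c : ℕ → X →ₗ[𝕜] 𝕜}

lemma aux_smul_mem (hq : IsQuasiNorm 𝕜 q) (hb : IsBasis q e c) {t : 𝕜} (ht : t ≠ 0)
    {f : X} {v : ℝ} (hv : v ∈ WSet q e c f) : ‖t‖ * v ∈ WSet q e c (t • f) := by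
  classical
  obtain ⟨k, Z, T, ζ, ⟨hTZ, hTk, hβ, hγ, hζ', hη, hε⟩, rfl⟩ := hv
  refine ⟨k, Z, T, fun m => t * ζ m, ⟨hTZ, hTk, ?_, ?_, ?_, ?_, ?_⟩, ?_⟩
  · intro m hm hkm
    rw [map_smul, smul_eq_mul, hβ m hm hkm, mul_zero]
  · intro m hm n hkn
    simp only [map_smul, smul_eq_mul, norm_mul]
    exact mul_le_mul_of_nonneg_left (hγ m hm n hkn) (norm_nonneg t)
  · intro n hnk hne m hm
    have hne' : c n f ≠ 0 := by
      intro h0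
      apply hne
      rw [map_smul, smul_eq_mul, h0, mul_zero]
    simp only [map_smul, smul_eq_mul, norm_mul]
    exact mul_le_mul_of_nonneg_left (hζ' n hnk hne' m hm) (norm_nonneg t)
  · have hfe : (Finset.range k).filter (fun n => c n (t • f) ≠ 0)
        = (Finset.range k).filter (fun n => c n f ≠ 0) := by
      apply Finset.filter_congr
      intro n _
      simp [map_smul, smul_eq_mul, ht]
    rw [hfe]
    exact hη
  · intro m hm m' hm' hm'T
    simp only [norm_mul]
    exact mul_le_mul_of_nonneg_left (hε m hm m' hm' hm'T) (norm_nonneg t)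
  · have hvec : t • f - psum c e k (t • f) + ∑ m ∈ Z, (t * ζ m) • e m
        = t • (f - psum c e k f + ∑ m ∈ Z, ζ m • e m) := by
      rw [smul_add, smul_sub]
      congr 1
      · congr 1
        unfold psum proj
        rw [Finset.smul_sum]
        apply Finset.sum_congr rfl
        intro n _
        rw [map_smul, smul_eq_mul, mul_smul]
      · rw [Finset.smul_sum]
        apply Finset.sum_congr rfl
        intro m _
        rw [mul_smul]
    simp only []
    rw [hvec, hq.hom]

end Smul


variable (q : X → ℝ) (e : ℕ → X) (c : ℕ → X →ₗ[𝕜] 𝕜)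


/-- a partially-greedy basis of a quasi-Banach space admits an
equivalent quasi-norm with respect to which it is `1`-partially-greedy. -/
theorem stmt14 (hq : IsQuasiNorm 𝕜 q) (hb : IsBasis q e c)
    (Cpg : ℝ) (hCpg : 0 < Cpg) (hpg : PartiallyGreedy q e c Cpg) :
    ∃ q₀ : X → ℝ, IsQuasiNorm 𝕜 q₀ ∧
      (∃ a b : ℝ, 0 < a ∧ a ≤ b ∧
        ∀ f : X, a * q f ≤ q₀ f ∧ q₀ f ≤ b * q f) ∧
      PartiallyGreedy q₀ e c 1 := by
  classical
  obtain ⟨κ, hκ1, hκ⟩ := hq.quasi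
  -- 1 ≤ Cpg
  have he0 : e 0 ≠ 0 := by
    intro h0
    have hb0 := hb.biorth 0 0
    rw [h0, map_zero] at hb0
    simp at hb0
  have hCpg1 : 1 ≤ Cpg := by
    have hpos := hq.pos (e 0) he0
    have h1 := hpg (e 0) ∅ (fun n hn => absurd hn (Finset.notMem_empty n)) 0 le_rfl
    simp only [proj, psum, Finset.range_zero, Finset.sum_empty, sub_zero] at h1
    nlinarith
  set Cs : ℝ := κ * Cpg * (1 + 2 * κ * Cpg) with hCs
  have hκ0 : 0 < κ := lt_of_lt_of_le zero_lt_one hκ1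
  have hCs1 : 1 ≤ Cs := by
    nlinarith [mul_nonneg (sub_nonneg.mpr hκ1) (sub_nonneg.mpr hCpg1),
      mul_pos hκ0 hCpg, mul_pos (mul_pos hκ0 hCpg) (mul_pos hκ0 hCpg)]
  have hCs0 : 0 < Cs := lt_of_lt_of_le zero_lt_one hCs1
  set q₀ : X → ℝ := fun f => sInf (WSet q e c f) with hq₀def
  have hle : ∀ f, q₀ f ≤ q f :=
    fun f => csInf_le (aux_WSet_bdd hq f) (aux_self_mem q e c f)
  have hge : ∀ f, q f ≤ Cs * q₀ f := by
    intro f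
    have hstep : ∀ v ∈ WSet q e c f, q f / Cs ≤ v := by
      intro v hv
      rw [div_le_iff₀ hCs0]
      calc q f ≤ Cs * v := aux_bound hq hb hκ1 hκ hCpg hpg hv
        _ = v * Cs := mul_comm _ _
    have h2 : q f / Cs ≤ q₀ f := le_csInf (aux_WSet_nonempty q e c f) hstep
    calc q f = Cs * (q f / Cs) := by field_simp
      _ ≤ Cs * q₀ f := mul_le_mul_of_nonneg_left h2 hCs0.le
  have hq₀nonneg : ∀ f, 0 ≤ q₀ f :=
    fun f => le_csInf (aux_WSet_nonempty q e c f)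
      (fun v hv => aux_WSet_nonneg hq hv)
  have hq₀zero : q₀ 0 = 0 := by
    apply le_antisymm
    · have h := hle 0
      rwa [aux_q_zero hq] at h
    · exact hq₀nonneg 0
  have hq₀pos : ∀ f : X, f ≠ 0 → 0 < q₀ f := by
    intro f hf
    by_contra hcon
    push_neg at hcon
    have h0 : q₀ f = 0 := le_antisymm hcon (hq₀nonneg f)
    have := hge f
    rw [h0, mul_zero] at this
    exact absurd (lt_of_lt_of_le (hq.pos f hf) this) (lt_irrefl 0)
  have hq₀hom : ∀ (t : 𝕜) (f : X), q₀ (t • f) = ‖t‖ * q₀ f := by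
    intro t f
    by_cases ht : t = 0
    · rw [ht, zero_smul, hq₀zero, norm_zero, zero_mul]
    · have hset : WSet q e c (t • f) = (fun v => ‖t‖ * v) '' WSet q e c f := by
        ext v
        constructor
        · intro hv
          have h2 := aux_smul_mem hq hb (inv_ne_zero ht) hv
          rw [inv_smul_smul₀ ht] at h2
          refine ⟨‖t⁻¹‖ * v, h2, ?_⟩
          rw [norm_inv]
          have htn : ‖t‖ ≠ 0 := norm_ne_zero_iff.mpr ht
          field_simp
        · rintro ⟨w, hw, rfl⟩
          exact aux_smul_mem hq hb ht hw
      show sInf (WSet q e c (t • f)) = ‖t‖ * sInf (WSet q e c f)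
      rw [hset]
      have himg : (fun v => ‖t‖ * v) '' WSet q e c f = ‖t‖ • WSet q e c f := by
        rw [← Set.image_smul]
        rfl
      rw [himg, Real.sInf_smul_of_nonneg (norm_nonneg t), smul_eq_mul]
  refine ⟨q₀, ⟨hq₀pos, hq₀hom, ⟨κ * Cs, ?_, ?_⟩⟩, ⟨Cs⁻¹, 1, inv_pos.mpr hCs0, ?_, ?_⟩, ?_⟩
  · nlinarith
  · intro f g
    calc q₀ (f + g) ≤ q (f + g) := hle _
      _ ≤ κ * (q f + q g) := hκ f g
      _ ≤ κ * (Cs * q₀ f + Cs * q₀ g) := by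
          apply mul_le_mul_of_nonneg_left _ hκ0.le
          exact add_le_add (hge f) (hge g)
      _ = κ * Cs * (q₀ f + q₀ g) := by ring
  · rw [inv_le_one₀ hCs0]
    exact hCs1
  · intro f
    constructor
    · calc Cs⁻¹ * q f ≤ Cs⁻¹ * (Cs * q₀ f) :=
            mul_le_mul_of_nonneg_left (hge f) (inv_pos.mpr hCs0).le
        _ = q₀ f := by field_simp
    · rw [one_mul]
      exact hle f
  · intro f A hA k hk
    rw [one_mul]
    apply le_csInf (aux_WSet_nonempty q e c (f - psum c e k f))
    intro v hv
    obtain ⟨v', hv', hle'⟩ := aux_trans hq hb hA hk hv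
    exact le_trans (csInf_le (aux_WSet_bdd hq _) hv') hle'


end GreedyQB
end
end

section
/- Let B = (e_n) be a basis of a p-Banach space X (0 < p ≤ 1), let J ⊂ ℕ be a finite set, let (a_n)_{n∈J} be scalars with 0 ≤ a_n ≤ 1, and let g ∈ X. Then ‖g + Σ_{n∈J} a_n e_n‖ ≤ A_p·sup{‖g + Σ_{n∈A} e_n‖ : A ⊆ J}, where A_p = (2^p − 1)^{−1/p}. -/
open Finset

noncomputable section

namespace GreedyQB

variable {𝕜 X : Type*} [RCLike 𝕜] [AddCommGroup X] [Module 𝕜 X]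

variable (q : X → ℝ) (e : ℕ → X) (c : ℕ → X →ₗ[𝕜] 𝕜)



section Aux

variable {𝕜' X' : Type*} [RCLike 𝕜'] [AddCommGroup X'] [Module 𝕜' X']

lemma aux_qzero {p : ℝ} {q : X' → ℝ} (hq : IsPNorm 𝕜' p q) : q 0 = 0 := by
  have := hq.hom (0 : 𝕜') 0
  simpa using this

lemma aux_qnonneg {p : ℝ} {q : X' → ℝ} (hq : IsPNorm 𝕜' p q) (f : X') : 0 ≤ q f := by
  rcases eq_or_ne f 0 with rfl | hf
  · simp [aux_qzero hq]
  · exact (hq.pos f hf).le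

lemma aux_smul_real {p : ℝ} {q : X' → ℝ} (hq : IsPNorm 𝕜' p q) {t : ℝ} (ht : 0 ≤ t) (f : X') :
    q ((t : 𝕜') • f) = t * q f := by
  rw [hq.hom]
  simp [RCLike.norm_ofReal, abs_of_nonneg ht]

lemma aux_sum_le {p : ℝ} (hp : 0 < p) {q : X' → ℝ} (hq : IsPNorm 𝕜' p q)
    {ι : Type*} (s : Finset ι) (f : ι → X') :
    q (∑ i ∈ s, f i) ^ p ≤ ∑ i ∈ s, q (f i) ^ p := by
  classical
  induction s using Finset.induction with
  | empty => simp [aux_qzero hq, Real.zero_rpow hp.ne']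
  | insert _ _ h ih =>
    rw [Finset.sum_insert h, Finset.sum_insert h]
    exact (hq.ptri _ _).trans (by linarith)

lemma aux_digit (y : ℝ) : (⌊2*y⌋ - 2*⌊y⌋ : ℤ) = 0 ∨ (⌊2*y⌋ - 2*⌊y⌋ : ℤ) = 1 := by
  have h1 : 2*⌊y⌋ ≤ ⌊2*y⌋ := Int.le_floor.2 (by push_cast; linarith [Int.floor_le y])
  have h2 : ⌊2*y⌋ < 2*⌊y⌋ + 2 := Int.floor_lt.2 (by push_cast; linarith [Int.lt_floor_add_one y])
  omega

lemma aux_telescope (x : ℝ) (N : ℕ) :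
    ∑ k ∈ Finset.range N, (((⌊x*2^(k+1)⌋ : ℝ) - 2*(⌊x*2^k⌋:ℝ)) * ((2:ℝ)⁻¹)^(k+1))
      = (⌊x*2^N⌋ : ℝ) * ((2:ℝ)⁻¹)^N - (⌊x⌋:ℝ) := by
  induction N with
  | zero => simp
  | succ N ih =>
    rw [Finset.sum_range_succ, ih]
    field_simp
    ring

lemma aux_geom (N : ℕ) :
    ∑ k ∈ Finset.range N, ((2:ℝ)⁻¹)^(k+1) = 1 - ((2:ℝ)⁻¹)^N := by
  induction N with
  | zero => simp
  | succ N ih => rw [Finset.sum_range_succ, ih]; ring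

end Aux

/-- in a `p`-Banach space,
`‖g + ∑_{n∈J} a_n e_n‖ ≤ A_p sup{‖g + ∑_{n∈A} e_n‖ : A ⊆ J}` when `0 ≤ a_n ≤ 1`. -/
theorem stmt16 (p : ℝ) (hp : 0 < p) (hp1 : p ≤ 1)
    (hq : IsPNorm 𝕜 p q) (hb : IsBasis q e c)
    (J : Finset ℕ) (a : ℕ → ℝ) (ha : ∀ n ∈ J, 0 ≤ a n ∧ a n ≤ 1) (g : X) :
    q (g + ∑ n ∈ J, (a n : 𝕜) • e n) ≤
      Ap p * sSup {r : ℝ | ∃ A ⊆ J, r = q (g + ∑ n ∈ A, e n)} := by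
  classical
  obtain ⟨M, hM⟩ := hb.semin
  have hM0 : 0 ≤ M := le_trans (aux_qnonneg hq (e 0)) (hM 0).1
  set Sset := {r : ℝ | ∃ A ⊆ J, r = q (g + ∑ n ∈ A, e n)} with hSset
  set S := sSup Sset with hSdef
  have hbdd : BddAbove Sset := by
    have hseteq : Sset = (fun A : Finset ℕ => q (g + ∑ n ∈ A, e n)) '' ↑J.powerset := by
      ext r
      constructor
      · rintro ⟨A, hA, rfl⟩; exact ⟨A, by simpa using hA, rfl⟩
      · rintro ⟨A, hA, rfl⟩; exact ⟨A, by simpa using hA, rfl⟩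
    rw [hseteq]
    exact (J.powerset.finite_toSet.image _).bddAbove
  have hle : ∀ A : Finset ℕ, A ⊆ J → q (g + ∑ n ∈ A, e n) ≤ S :=
    fun A hA => le_csSup hbdd ⟨A, hA, rfl⟩
  have hqg : q g ≤ S := by simpa using hle ∅ (Finset.empty_subset J)
  have hS0 : 0 ≤ S := (aux_qnonneg hq g).trans hqg
  set v := (2:ℝ)^p with hv
  have h2p : 1 < v := Real.one_lt_rpow_iff_of_pos (by norm_num) |>.2 (Or.inl ⟨by norm_num, hp⟩)
  have h21 : 0 < v - 1 := by linarith
  set u := (2:ℝ)^(-p) with hu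
  have hu0 : 0 < u := Real.rpow_pos_of_pos (by norm_num) _
  have hu_eq : u = v⁻¹ := by rw [hu, hv, Real.rpow_neg (by norm_num)]
  have hu1 : u < 1 := by
    rw [hu_eq]
    exact inv_lt_one_of_one_lt₀ h2p
  have hpow : ∀ m : ℕ, (((2:ℝ)⁻¹)^m) ^ p = u ^ m := by
    intro m
    rw [← Real.rpow_natCast ((2:ℝ)⁻¹) m, ← Real.rpow_natCast u m,
        ← Real.rpow_mul (by norm_num : (0:ℝ) ≤ 2⁻¹),
        hu, ← Real.rpow_mul (by norm_num : (0:ℝ) ≤ 2),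
        show (2:ℝ)⁻¹ = (2:ℝ)^(-1:ℝ) by rw [Real.rpow_neg_one],
        ← Real.rpow_mul (by norm_num : (0:ℝ) ≤ 2)]
    ring_nf
  set F := g + ∑ n ∈ J, (a n : 𝕜) • e n with hF
  set C := S^p + J.card * (2:ℝ)^p * M^p with hC
  have key : ∀ N : ℕ, q F ^ p ≤ (v - 1)⁻¹ * S ^ p + u ^ N * C := by
    intro N
    set t := ((2:ℝ)⁻¹)^N with ht
    have ht0 : 0 < t := by positivity
    have ht1 : t ≤ 1 := pow_le_one₀ (by norm_num) (by norm_num)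
    have h2Nt : (2:ℝ)^N * t = 1 := by
      rw [ht, inv_pow]
      exact mul_inv_cancel₀ (by positivity)
    set x : ℕ → ℝ := fun n => a n * (1 - t) with hx
    have hx01 : ∀ n ∈ J, 0 ≤ x n ∧ x n < 1 := by
      intro n hn
      obtain ⟨h1, h2⟩ := ha n hn
      have hxn : x n = a n * (1 - t) := rfl
      constructor
      · rw [hxn]; exact mul_nonneg h1 (by linarith)
      · nlinarith [mul_nonneg (by linarith : (0:ℝ) ≤ 1 - a n) (by linarith : (0:ℝ) ≤ 1 - t)]
    set d : ℕ → ℕ → ℝ := fun n k => (⌊x n * 2^(k+1)⌋ : ℝ) - 2*(⌊x n * 2^k⌋:ℝ) with hd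
    have hd01 : ∀ n k, d n k = 0 ∨ d n k = 1 := by
      intro n k
      have h2y : x n * 2^(k+1) = 2 * (x n * 2^k) := by ring
      have hcast : d n k = ((⌊2 * (x n * 2^k)⌋ - 2*⌊x n * 2^k⌋ : ℤ) : ℝ) := by
        simp only [hd, h2y]
        push_cast
        ring
      rcases aux_digit (x n * 2^k) with h | h
      · left; rw [hcast, h]; norm_num
      · right; rw [hcast, h]; norm_num
    set σ : ℕ → ℝ := fun n => (⌊x n * 2^N⌋ : ℝ) * t with hσdef
    have hσ : ∀ n ∈ J, ∑ k ∈ Finset.range N, d n k * ((2:ℝ)⁻¹)^(k+1) = σ n := by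
      intro n hn
      have h0 : ⌊x n⌋ = 0 := Int.floor_eq_zero_iff.2 ⟨(hx01 n hn).1, (hx01 n hn).2⟩
      rw [show (∑ k ∈ Finset.range N, d n k * ((2:ℝ)⁻¹)^(k+1)) =
          ∑ k ∈ Finset.range N, (((⌊x n*2^(k+1)⌋ : ℝ) - 2*(⌊x n*2^k⌋:ℝ)) * ((2:ℝ)⁻¹)^(k+1)) from rfl,
        aux_telescope, h0]
      simp [hσdef, ht]
    set r : ℕ → ℝ := fun n => a n - σ n with hrdef
    have hr : ∀ n ∈ J, 0 ≤ r n ∧ r n ≤ 2 * t := by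
      intro n hn
      obtain ⟨ha1, ha2⟩ := ha n hn
      have hf1 : (⌊x n * 2^N⌋ : ℝ) ≤ x n * 2^N := Int.floor_le _
      have hf2 : x n * 2^N - 1 < (⌊x n * 2^N⌋ : ℝ) := by linarith [Int.lt_floor_add_one (x n * 2^N)]
      have hrn : r n = a n - σ n := rfl
      have hxa' : x n = a n * (1 - t) := rfl
      constructor
      · have : σ n ≤ x n := by
          have := mul_le_mul_of_nonneg_right hf1 ht0.le
          calc σ n ≤ x n * 2^N * t := this
            _ = x n * ((2:ℝ)^N * t) := by ring
            _ = x n := by rw [h2Nt]; ring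
        have hax : a n - x n = a n * t := by rw [hxa']; ring
        linarith [mul_nonneg ha1 ht0.le]
      · have : x n - t < σ n := by
          have h5 := mul_lt_mul_of_pos_right hf2 ht0
          have h6 : x n * 2^N * t = x n := by
            calc x n * 2^N * t = x n * ((2:ℝ)^N * t) := by ring
              _ = x n := by rw [h2Nt]; ring
          calc x n - t = (x n * 2^N - 1) * t := by
                rw [sub_mul, h6]; ring
            _ < σ n := h5
        have hax : a n - x n = a n * t := by rw [hxa']; ring
        have hat : a n * t ≤ t := mul_le_of_le_one_left ht0.le ha2
        linarith
    set w : ℕ → ℝ := fun k => ((2:ℝ)⁻¹)^(k+1) with hwdef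
    -- the decomposition
    have expand : ∑ k ∈ Finset.range N, ((w k : ℝ) : 𝕜) • (g + ∑ n ∈ J, ((d n k : ℝ) : 𝕜) • e n)
        = ((1 - t : ℝ) : 𝕜) • g + ∑ n ∈ J, ((σ n : ℝ) : 𝕜) • e n := by
      have step : ∀ k ∈ Finset.range N,
          ((w k : ℝ) : 𝕜) • (g + ∑ n ∈ J, ((d n k : ℝ) : 𝕜) • e n)
          = ((w k : ℝ) : 𝕜) • g + ∑ n ∈ J, ((d n k * w k : ℝ) : 𝕜) • e n := by
        intro k _
        rw [smul_add, Finset.smul_sum]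
        congr 1
        refine Finset.sum_congr rfl fun n _ => ?_
        rw [smul_smul]
        congr 1
        push_cast
        ring
      rw [Finset.sum_congr rfl step, Finset.sum_add_distrib, ← Finset.sum_smul, Finset.sum_comm]
      congr 1
      · congr 1
        rw [← RCLike.ofReal_sum]
        norm_cast
        exact aux_geom N
      · refine Finset.sum_congr rfl fun n hn => ?_
        rw [← Finset.sum_smul]
        congr 1
        rw [← RCLike.ofReal_sum]
        norm_cast
        exact hσ n hn
    have hdecomp : F
        = (((t : ℝ) : 𝕜) • g
            + ∑ k ∈ Finset.range N, ((w k : ℝ) : 𝕜) • (g + ∑ n ∈ J, ((d n k : ℝ) : 𝕜) • e n))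
          + ∑ n ∈ J, ((r n : ℝ) : 𝕜) • e n := by
      rw [expand]
      have hrearr : ((t:ℝ):𝕜) • g + (((1-t:ℝ):𝕜) • g + ∑ n ∈ J, ((σ n:ℝ):𝕜) • e n)
            + ∑ n ∈ J, ((r n:ℝ):𝕜) • e n
          = (((t:ℝ):𝕜) • g + ((1-t:ℝ):𝕜) • g)
            + (∑ n ∈ J, ((σ n:ℝ):𝕜) • e n + ∑ n ∈ J, ((r n:ℝ):𝕜) • e n) := by abel
      rw [hrearr, ← add_smul, ← Finset.sum_add_distrib]
      have hg1 : (((t:ℝ):𝕜) + ((1-t:ℝ):𝕜)) = 1 := by push_cast; ring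
      rw [hg1, one_smul, hF]
      congr 1
      refine Finset.sum_congr rfl fun n hn => ?_
      rw [← add_smul]
      congr 1
      simp only [hrdef]
      push_cast
      ring
    -- estimates
    have step1 : q F ^ p ≤
        q (((t:ℝ):𝕜) • g) ^ p
        + q (∑ k ∈ Finset.range N, ((w k:ℝ):𝕜) • (g + ∑ n ∈ J, ((d n k:ℝ):𝕜) • e n)) ^ p
        + q (∑ n ∈ J, ((r n:ℝ):𝕜) • e n) ^ p := by
      rw [hdecomp]
      have h1 := hq.ptri (((t:ℝ):𝕜) • g
          + ∑ k ∈ Finset.range N, ((w k:ℝ):𝕜) • (g + ∑ n ∈ J, ((d n k:ℝ):𝕜) • e n))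
        (∑ n ∈ J, ((r n:ℝ):𝕜) • e n)
      have h2 := hq.ptri (((t:ℝ):𝕜) • g)
        (∑ k ∈ Finset.range N, ((w k:ℝ):𝕜) • (g + ∑ n ∈ J, ((d n k:ℝ):𝕜) • e n))
      linarith
    have hT0 : q (((t:ℝ):𝕜) • g) ^ p ≤ u^N * S ^ p := by
      rw [aux_smul_real hq ht0.le]
      calc (t * q g) ^ p ≤ (t * S) ^ p := by
            apply Real.rpow_le_rpow (mul_nonneg ht0.le (aux_qnonneg hq g))
              (mul_le_mul_of_nonneg_left hqg ht0.le) hp.le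
        _ = t^p * S^p := Real.mul_rpow ht0.le hS0
        _ = u^N * S^p := by rw [ht, hpow N]
    have hT1 : q (∑ k ∈ Finset.range N, ((w k:ℝ):𝕜) • (g + ∑ n ∈ J, ((d n k:ℝ):𝕜) • e n)) ^ p
        ≤ (v - 1)⁻¹ * S ^ p := by
      refine (aux_sum_le hp hq _ _).trans ?_
      have hterm : ∀ k ∈ Finset.range N,
          q (((w k:ℝ):𝕜) • (g + ∑ n ∈ J, ((d n k:ℝ):𝕜) • e n)) ^ p ≤ u^(k+1) * S^p := by
        intro k _
        have hwk : (0:ℝ) ≤ w k := by positivity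
        have hqk : q (g + ∑ n ∈ J, ((d n k:ℝ):𝕜) • e n) ≤ S := by
          have heq : (∑ n ∈ J, ((d n k:ℝ):𝕜) • e n)
              = ∑ n ∈ J.filter (fun n => d n k = 1), e n := by
            rw [Finset.sum_filter]
            refine Finset.sum_congr rfl fun n _ => ?_
            rcases hd01 n k with h | h
            · rw [h]; norm_num
            · rw [h]; norm_num
          rw [heq]
          exact hle _ (Finset.filter_subset _ _)
        rw [aux_smul_real hq hwk]
        calc (w k * q (g + ∑ n ∈ J, ((d n k:ℝ):𝕜) • e n)) ^ p ≤ (w k * S) ^ p := by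
              apply Real.rpow_le_rpow (mul_nonneg hwk (aux_qnonneg hq _))
                (mul_le_mul_of_nonneg_left hqk hwk) hp.le
          _ = (w k)^p * S^p := Real.mul_rpow hwk hS0
          _ = u^(k+1) * S^p := by rw [hwdef, hpow (k+1)]
      refine (Finset.sum_le_sum hterm).trans ?_
      rw [← Finset.sum_mul]
      refine mul_le_mul_of_nonneg_right ?_ (by positivity)
      have h1 : ∑ k ∈ Finset.range N, u^(k+1) = u * ∑ k ∈ Finset.range N, u^k := by
        rw [Finset.mul_sum]
        exact Finset.sum_congr rfl fun k _ => by ring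
      rw [h1]
      have h2 : ∑ k ∈ Finset.range N, u^k ≤ (1-u)⁻¹ := by
        have hne : (0:ℝ) < 1 - u := by linarith
        rw [geom_sum_eq hu1.ne]
        rw [show (u^N - 1)/(u - 1) = (1 - u^N)/(1-u) by
          rw [div_eq_div_iff (by linarith) (by linarith)]; ring]
        rw [← one_div]
        gcongr
        nlinarith [pow_nonneg hu0.le N]
      calc u * ∑ k ∈ Finset.range N, u^k ≤ u * (1-u)⁻¹ :=
            mul_le_mul_of_nonneg_left h2 hu0.le
        _ = (v - 1)⁻¹ := by
            rw [hu_eq]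
            have hv0 : v ≠ 0 := by positivity
            have h1 : (1:ℝ) - v⁻¹ = (v - 1) * v⁻¹ := by field_simp
            rw [h1, mul_inv, inv_inv]
            calc v⁻¹ * ((v-1)⁻¹ * v) = (v * v⁻¹) * (v-1)⁻¹ := by ring
              _ = (v-1)⁻¹ := by rw [mul_inv_cancel₀ hv0, one_mul]
    have hT2 : q (∑ n ∈ J, ((r n:ℝ):𝕜) • e n) ^ p
        ≤ (J.card : ℝ) * ((2:ℝ)^p * (u^N * M^p)) := by
      refine (aux_sum_le hp hq _ _).trans ?_
      have hterm : ∀ n ∈ J, q (((r n:ℝ):𝕜) • e n) ^ p ≤ (2:ℝ)^p * (u^N * M^p) := by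
        intro n hn
        rw [aux_smul_real hq (hr n hn).1]
        have h1 : r n * q (e n) ≤ (2*t) * M :=
          mul_le_mul (hr n hn).2 (hM n).1 (aux_qnonneg hq _) (by positivity)
        calc (r n * q (e n))^p ≤ ((2*t)*M)^p := by
              apply Real.rpow_le_rpow
                (mul_nonneg (hr n hn).1 (aux_qnonneg hq _)) h1 hp.le
          _ = (2*t)^p * M^p := Real.mul_rpow (by positivity) hM0
          _ = ((2:ℝ)^p * t^p) * M^p := by
              rw [Real.mul_rpow (by norm_num) ht0.le]
          _ = (2:ℝ)^p * (u^N * M^p) := by rw [ht, hpow N]; ring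
      refine (Finset.sum_le_sum hterm).trans ?_
      rw [Finset.sum_const, nsmul_eq_mul]
    have hring : u^N * C = u^N * S^p + (J.card : ℝ) * ((2:ℝ)^p * (u^N * M^p)) := by
      rw [hC]; ring
    linarith
  -- pass to the limit
  have hfinal : q F ^ p ≤ (v - 1)⁻¹ * S ^ p := by
    have h0 : Filter.Tendsto (fun N : ℕ => u^N) Filter.atTop (nhds 0) :=
      tendsto_pow_atTop_nhds_zero_of_lt_one hu0.le hu1
    have hlim : Filter.Tendsto (fun N : ℕ => (v - 1)⁻¹ * S ^ p + u^N * C)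
        Filter.atTop (nhds ((v - 1)⁻¹ * S ^ p)) := by
      have h2 := (h0.mul_const C).const_add ((v - 1)⁻¹ * S ^ p)
      simpa using h2
    exact ge_of_tendsto' hlim key
  have hqF0 : 0 ≤ q F := aux_qnonneg hq F
  calc q F = (q F ^ p) ^ p⁻¹ := (Real.rpow_rpow_inv hqF0 hp.ne').symm
    _ ≤ ((v - 1)⁻¹ * S ^ p) ^ p⁻¹ := by
        apply Real.rpow_le_rpow (by positivity) hfinal (by positivity)
    _ = Ap p * S := by
        rw [Real.mul_rpow (by positivity) (by positivity),
          Real.rpow_rpow_inv hS0 hp.ne', Real.inv_rpow h21.le,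
          ← Real.rpow_neg h21.le, Ap, hv]
        congr 1
        rw [neg_div, one_div]


end GreedyQB
end
end

section
/- Let B = (e_n) be a basis of a p-Banach space X (0 < p ≤ 1), let J ⊂ ℕ be a finite set, let (a_n)_{n∈J} be scalars with |a_n| ≤ 1, and let g ∈ X. Then ‖g + Σ_{n∈J} a_n e_n‖ ≤ A_p·sup{‖g + Σ_{n∈J} ε_n e_n‖ : |ε_n| = 1 for all n ∈ J}, where A_p = (2^p − 1)^{−1/p}. -/
open Finset

noncomputable section

namespace GreedyQB

variable {𝕜 X : Type*} [RCLike 𝕜] [AddCommGroup X] [Module 𝕜 X]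

variable (q : X → ℝ) (e : ℕ → X) (c : ℕ → X →ₗ[𝕜] 𝕜)


private lemma q_zero' {p : ℝ} (hq : IsPNorm 𝕜 p q) : q 0 = 0 := by
  have := hq.hom 0 0
  simpa using this

private lemma q_nonneg' {p : ℝ} (hq : IsPNorm 𝕜 p q) (f : X) : 0 ≤ q f := by
  by_cases h : f = 0
  · rw [h, q_zero' q hq]
  · exact (hq.pos f h).le

private lemma q_sum_le' {p : ℝ} (hp : 0 < p) (hq : IsPNorm 𝕜 p q)
    (J : Finset ℕ) (v : ℕ → X) :
    q (∑ n ∈ J, v n) ^ p ≤ ∑ n ∈ J, q (v n) ^ p := by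
  induction J using Finset.cons_induction with
  | empty => simp [q_zero' q hq, Real.zero_rpow hp.ne']
  | cons a s has ih =>
      rw [Finset.sum_cons, Finset.sum_cons]
      exact (hq.ptri _ _).trans (by linarith)

/-- Every scalar of norm at most one is the average of a unimodular scalar and a
scalar of norm at most one. -/
private lemma scalar_decomp (b : 𝕜) (hb : ‖b‖ ≤ 1) :
    ∃ ε r : 𝕜, ‖ε‖ = 1 ∧ ‖r‖ ≤ 1 ∧ ε + r = 2 * b := by
  by_cases h : b = 0
  · exact ⟨1, -1, by simp, by simp, by simp [h]⟩
  · have hb0 : 0 < ‖b‖ := norm_pos_iff.mpr h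
    refine ⟨(‖b‖ : 𝕜)⁻¹ * b, 2 * b - (‖b‖ : 𝕜)⁻¹ * b, ?_, ?_, by ring⟩
    · rw [norm_mul, norm_inv, RCLike.norm_ofReal, abs_of_pos hb0,
        inv_mul_cancel₀ hb0.ne']
    · have : 2 * b - (‖b‖ : 𝕜)⁻¹ * b = ((2 - ‖b‖⁻¹ : ℝ) : 𝕜) * b := by
        push_cast; ring
      rw [this, norm_mul, RCLike.norm_ofReal]
      have : |2 - ‖b‖⁻¹| * ‖b‖ = |2 * ‖b‖ - 1| := by
        rw [← abs_of_pos hb0, ← abs_mul]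
        congr 1
        field_simp
        rw [abs_of_pos hb0]; ring
      rw [this, abs_le]
      constructor <;> nlinarith

/-- in a `p`-Banach space,
`‖g + ∑_{n∈J} a_n e_n‖ ≤ A_p sup{‖g + ∑_{n∈J} ε_n e_n‖ : |ε_n| = 1}` when `|a_n| ≤ 1`. -/
theorem stmt17 (p : ℝ) (hp : 0 < p) (hp1 : p ≤ 1)
    (hq : IsPNorm 𝕜 p q) (hb : IsBasis q e c)
    (J : Finset ℕ) (a : ℕ → 𝕜) (ha : ∀ n ∈ J, ‖a n‖ ≤ 1) (g : X) :
    q (g + ∑ n ∈ J, a n • e n) ≤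
      Ap p * sSup {r : ℝ | ∃ ε : ℕ → 𝕜, (∀ n ∈ J, ‖ε n‖ = 1) ∧
        r = q (g + ∑ n ∈ J, ε n • e n)} := by
  classical
  set setS : Set ℝ := {r : ℝ | ∃ ε : ℕ → 𝕜, (∀ n ∈ J, ‖ε n‖ = 1) ∧
      r = q (g + ∑ n ∈ J, ε n • e n)} with hsetS
  set S : ℝ := sSup setS with hS
  set C : ℝ := q g ^ p + ∑ n ∈ J, q (e n) ^ p with hC
  have hqnn := q_nonneg' q hq
  -- crude bound
  have hcrude : ∀ b : ℕ → 𝕜, (∀ n ∈ J, ‖b n‖ ≤ 1) →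
      q (g + ∑ n ∈ J, b n • e n) ^ p ≤ C := by
    intro b hb
    have h1 : q (g + ∑ n ∈ J, b n • e n) ^ p ≤
        q g ^ p + q (∑ n ∈ J, b n • e n) ^ p := hq.ptri _ _
    have h2 : q (∑ n ∈ J, b n • e n) ^ p ≤ ∑ n ∈ J, q (b n • e n) ^ p :=
      q_sum_le' q hp hq J _
    have h3 : ∑ n ∈ J, q (b n • e n) ^ p ≤ ∑ n ∈ J, q (e n) ^ p := by
      refine Finset.sum_le_sum fun n hn => ?_
      rw [hq.hom, Real.mul_rpow (norm_nonneg _) (hqnn _)]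
      have hb1 : ‖b n‖ ^ p ≤ 1 :=
        Real.rpow_le_one (norm_nonneg _) (hb n hn) hp.le
      nlinarith [Real.rpow_nonneg (hqnn (e n)) p,
        Real.rpow_nonneg (norm_nonneg (b n)) p]
    rw [hC]; linarith
  have hCnn : 0 ≤ C := by
    have := hcrude (fun _ => 1) (fun n _ => by simp)
    exact le_trans (Real.rpow_nonneg (hqnn _) p) this
  -- the sup set is nonempty and bounded above
  have hne : setS.Nonempty :=
    ⟨q (g + ∑ n ∈ J, (1 : 𝕜) • e n), fun _ => 1, fun n _ => by simp, rfl⟩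
  have hbdd : BddAbove setS := by
    refine ⟨C ^ (1 / p), fun r hr => ?_⟩
    obtain ⟨ε, hε, rfl⟩ := hr
    have h1 : q (g + ∑ n ∈ J, ε n • e n) ^ p ≤ C :=
      hcrude ε fun n hn => (hε n hn).le
    have := Real.rpow_le_rpow (Real.rpow_nonneg (hqnn _) p) h1
      (by positivity : (0:ℝ) ≤ 1 / p)
    rwa [← Real.rpow_mul (hqnn _), mul_one_div_cancel hp.ne', Real.rpow_one]
      at this
  have hSnn : 0 ≤ S := le_csSup hbdd hne.choose_spec |>.trans' (by
    obtain ⟨ε, hε, h⟩ := hne.choose_spec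
    rw [h]; exact hqnn _)
  have hSle : ∀ ε : ℕ → 𝕜, (∀ n ∈ J, ‖ε n‖ = 1) →
      q (g + ∑ n ∈ J, ε n • e n) ≤ S :=
    fun ε hε => le_csSup hbdd ⟨ε, hε, rfl⟩
  set x : ℝ := (2 : ℝ) ^ (-p) with hx
  have h2p : (1 : ℝ) < 2 ^ p := by
    rw [Real.one_lt_rpow_iff_of_pos (by norm_num)]
    exact Or.inl ⟨by norm_num, hp⟩
  have h2pos : (0 : ℝ) < (2:ℝ) ^ p := lt_trans one_pos h2p
  have hxval : x = ((2:ℝ) ^ p)⁻¹ := by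
    rw [hx, Real.rpow_neg (by norm_num)]
  have hx0 : 0 < x := by rw [hxval]; positivity
  have hx1 : x < 1 := by
    rw [hxval]; exact inv_lt_one_of_one_lt₀ h2p
  -- key induction
  have key : ∀ N : ℕ, ∀ b : ℕ → 𝕜, (∀ n ∈ J, ‖b n‖ ≤ 1) →
      q (g + ∑ n ∈ J, b n • e n) ^ p ≤
        (∑ j ∈ Finset.range N, x ^ (j + 1)) * S ^ p + x ^ N * C := by
    intro N
    induction N with
    | zero => intro b hb; simpa using hcrude b hb
    | succ N ih =>
        intro b hb
        have hdec : ∀ n, ∃ er : 𝕜 × 𝕜, n ∈ J →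
            ‖er.1‖ = 1 ∧ ‖er.2‖ ≤ 1 ∧ er.1 + er.2 = 2 * b n := by
          intro n
          by_cases hn : n ∈ J
          · obtain ⟨ε, r, h1, h2, h3⟩ := scalar_decomp (b n) (hb n hn)
            exact ⟨(ε, r), fun _ => ⟨h1, h2, h3⟩⟩
          · exact ⟨(1, 1), fun h => absurd h hn⟩
        choose F hF using hdec
        set εf : ℕ → 𝕜 := fun n => (F n).1 with hεf
        set rf : ℕ → 𝕜 := fun n => (F n).2 with hrf
        have hid : (2 : 𝕜) • (g + ∑ n ∈ J, b n • e n) =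
            (g + ∑ n ∈ J, εf n • e n) + (g + ∑ n ∈ J, rf n • e n) := by
          have hsum : ∑ n ∈ J, εf n • e n + ∑ n ∈ J, rf n • e n =
              (2 : 𝕜) • ∑ n ∈ J, b n • e n := by
            rw [← Finset.sum_add_distrib, Finset.smul_sum]
            refine Finset.sum_congr rfl fun n hn => ?_
            rw [← add_smul, (hF n hn).2.2, smul_smul]
          rw [smul_add, ← hsum, two_smul]
          abel
        have h2q : 2 * q (g + ∑ n ∈ J, b n • e n) =
            q ((g + ∑ n ∈ J, εf n • e n) + (g + ∑ n ∈ J, rf n • e n)) := by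
          rw [← hid, hq.hom]
          norm_num
        set u := g + ∑ n ∈ J, εf n • e n with hu
        set v := g + ∑ n ∈ J, rf n • e n with hv
        have hq1 : q (g + ∑ n ∈ J, b n • e n) ^ p = x * q (u + v) ^ p := by
          have : q (g + ∑ n ∈ J, b n • e n) = q (u + v) / 2 := by
            linarith [h2q]
          rw [this, Real.div_rpow (hqnn _) (by norm_num), hxval]
          rw [mul_comm, div_eq_mul_inv]
        have hq2 : q (u + v) ^ p ≤ q u ^ p + q v ^ p := hq.ptri u v
        have hq3 : q u ^ p ≤ S ^ p :=
          Real.rpow_le_rpow (hqnn u) (hSle εf fun n hn => (hF n hn).1) hp.le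
        have hq4 : q v ^ p ≤
            (∑ j ∈ Finset.range N, x ^ (j + 1)) * S ^ p + x ^ N * C :=
          ih rf fun n hn => (hF n hn).2.1
        have hsum_succ : ∑ j ∈ Finset.range (N + 1), x ^ (j + 1) =
            x * (∑ j ∈ Finset.range N, x ^ (j + 1)) + x := by
          rw [Finset.sum_range_succ', pow_one, Finset.mul_sum]
          congr 1
          exact Finset.sum_congr rfl fun j _ => by ring
        rw [hq1, hsum_succ]
        have : x * q (u + v) ^ p ≤
            x * (S ^ p + ((∑ j ∈ Finset.range N, x ^ (j + 1)) * S ^ p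
              + x ^ N * C)) := by
          apply mul_le_mul_of_nonneg_left _ hx0.le
          linarith
        refine this.trans (le_of_eq ?_)
        ring
  -- take the limit N → ∞
  have hgeom : Filter.Tendsto
      (fun N : ℕ => (∑ j ∈ Finset.range N, x ^ (j + 1)) * S ^ p + x ^ N * C)
      Filter.atTop (nhds (x * (1 - x)⁻¹ * S ^ p)) := by
    have h1 : Filter.Tendsto (fun N : ℕ => ∑ j ∈ Finset.range N, x ^ (j + 1))
        Filter.atTop (nhds (x * (1 - x)⁻¹)) := by
      have h2 := (hasSum_geometric_of_lt_one hx0.le hx1).tendsto_sum_nat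
      have h3 := h2.const_mul x
      refine h3.congr fun N => ?_
      rw [Finset.mul_sum]
      exact Finset.sum_congr rfl fun j _ => by ring
    have h4 : Filter.Tendsto (fun N : ℕ => x ^ N * C) Filter.atTop (nhds 0) := by
      simpa using (tendsto_pow_atTop_nhds_zero_of_lt_one hx0.le hx1).mul_const C
    simpa using (h1.mul_const (S ^ p)).add h4
  have hlim : q (g + ∑ n ∈ J, a n • e n) ^ p ≤ x * (1 - x)⁻¹ * S ^ p :=
    ge_of_tendsto' hgeom fun N => key N a ha
  have hxfrac : x * (1 - x)⁻¹ = ((2:ℝ) ^ p - 1)⁻¹ := by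
    rw [hxval]
    have h1 : (2:ℝ) ^ p - 1 ≠ 0 := by linarith
    have h2 : (2:ℝ) ^ p ≠ 0 := h2pos.ne'
    field_simp
  rw [hxfrac] at hlim
  -- conclude via the 1/p power
  have hfin := Real.rpow_le_rpow (Real.rpow_nonneg (hqnn _) p) hlim
    (by positivity : (0:ℝ) ≤ 1 / p)
  rw [← Real.rpow_mul (hqnn _), mul_one_div_cancel hp.ne', Real.rpow_one] at hfin
  have hrhs : (((2:ℝ) ^ p - 1)⁻¹ * S ^ p) ^ (1 / p) = Ap p * S := by
    have hT : (0:ℝ) < (2:ℝ) ^ p - 1 := by linarith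
    rw [Real.mul_rpow (inv_nonneg.mpr hT.le) (Real.rpow_nonneg hSnn p),
      ← Real.rpow_mul hSnn, mul_one_div_cancel hp.ne', Real.rpow_one,
      Real.inv_rpow hT.le, ← Real.rpow_neg hT.le, Ap, neg_div]
  rw [hrhs] at hfin
  exact hfin

end GreedyQB
end
end

section
/- Let B = (e_n) be a basis of a p-Banach space X (0 < p ≤ 1), let J ⊂ ℕ be a finite set, and let (a_n)_{n∈J} be scalars with |a_n| ≤ 1. Then ‖Σ_{n∈J} a_n e_n‖ ≤ B_p·sup_{A⊆J}‖Σ_{n∈A} e_n‖, where B_p = 2^{1/p}A_p if the scalar field is ℝ and B_p = 4^{1/p}A_p if it is ℂ, with A_p = (2^p − 1)^{−1/p}. -/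
open Finset

noncomputable section

namespace GreedyQB

variable {𝕜 X : Type*} [RCLike 𝕜] [AddCommGroup X] [Module 𝕜 X]

variable (q : X → ℝ) (e : ℕ → X) (c : ℕ → X →ₗ[𝕜] 𝕜)



-- ===== auxiliary material for stmt18 =====

lemma IsPNorm.zero' {p : ℝ} {q : X → ℝ} (hq : IsPNorm 𝕜 p q) : q 0 = 0 := by
  have := hq.hom 0 0
  simpa using this

lemma IsPNorm.nonneg' {p : ℝ} {q : X → ℝ} (hq : IsPNorm 𝕜 p q) (f : X) : 0 ≤ q f := by
  rcases eq_or_ne f 0 with h | h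
  · simp [h, hq.zero']
  · exact (hq.pos f h).le

lemma IsPNorm.psum' {p : ℝ} (hp : 0 < p) {q : X → ℝ} (hq : IsPNorm 𝕜 p q)
    {ι : Type*} (s : Finset ι) (v : ι → X) :
    q (∑ i ∈ s, v i) ^ p ≤ ∑ i ∈ s, q (v i) ^ p := by
  classical
  induction s using Finset.cons_induction with
  | empty => simp [hq.zero' (𝕜 := 𝕜), Real.zero_rpow hp.ne']
  | cons a s ha ih =>
      rw [Finset.sum_cons, Finset.sum_cons]
      exact (hq.ptri _ _).trans (by linarith)

def brem (x : ℝ) : ℕ → ℝ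
  | 0 => x
  | k+1 => brem x k - (if (2:ℝ)⁻¹ ^ (k+1) ≤ brem x k then (2:ℝ)⁻¹ ^ (k+1) else 0)

lemma brem_bounds {x : ℝ} (h0 : 0 ≤ x) (h1 : x ≤ 1) (N : ℕ) :
    0 ≤ brem x N ∧ brem x N ≤ (2:ℝ)⁻¹ ^ N := by
  induction N with
  | zero => simpa [brem] using ⟨h0, h1⟩
  | succ k ih =>
      obtain ⟨hl, hr⟩ := ih
      rw [show brem x (k+1) = brem x k - (if (2:ℝ)⁻¹ ^ (k+1) ≤ brem x k
        then (2:ℝ)⁻¹ ^ (k+1) else 0) from rfl]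
      split_ifs with h
      · constructor
        · linarith
        · have : (2:ℝ)⁻¹ ^ k = 2 * (2:ℝ)⁻¹ ^ (k+1) := by ring
          linarith
      · exact ⟨by linarith, by linarith [not_le.mp h]⟩

lemma brem_sum (x : ℝ) (N : ℕ) :
    x = (∑ k ∈ Finset.range N,
      (if (2:ℝ)⁻¹ ^ (k+1) ≤ brem x k then (2:ℝ)⁻¹ ^ (k+1) else 0)) + brem x N := by
  induction N with
  | zero => simp [brem]
  | succ k ih =>
      rw [Finset.sum_range_succ,
        show brem x (k+1) = brem x k - (if (2:ℝ)⁻¹ ^ (k+1) ≤ brem x k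
          then (2:ℝ)⁻¹ ^ (k+1) else 0) from rfl]
      linarith

lemma half_pow_rpow (k : ℕ) (p : ℝ) :
    ((2:ℝ)⁻¹ ^ k) ^ p = ((2:ℝ)⁻¹ ^ p) ^ k := by
  rw [← Real.rpow_natCast ((2:ℝ)⁻¹) k, ← Real.rpow_natCast ((2:ℝ)⁻¹ ^ p) k,
    ← Real.rpow_mul (by norm_num), ← Real.rpow_mul (by norm_num), mul_comm]

lemma core_estimate {p : ℝ} (hp : 0 < p) {q : X → ℝ} (hq : IsPNorm 𝕜 p q)
    {e : ℕ → X} (M : ℝ) (hM : ∀ n, q (e n) ≤ M)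
    (J : Finset ℕ) (b : ℕ → ℝ) (hb0 : ∀ n ∈ J, 0 ≤ b n) (hb1 : ∀ n ∈ J, b n ≤ 1)
    {S : ℝ} (hS : ∀ A ⊆ J, q (∑ n ∈ A, e n) ≤ S) :
    q (∑ n ∈ J, ((b n : ℝ) : 𝕜) • e n) ^ p ≤ ((2:ℝ) ^ p - 1)⁻¹ * S ^ p := by
  classical
  set y : ℝ := (2:ℝ)⁻¹ ^ p with hy
  have hy0 : 0 < y := Real.rpow_pos_of_pos (by norm_num) p
  have hy1 : y < 1 := Real.rpow_lt_one (by norm_num) (by norm_num) hp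
  have hS0 : 0 ≤ S := by
    have := hS ∅ (Finset.empty_subset J)
    simpa [hq.zero' (𝕜 := 𝕜)] using this
  have hSp : 0 ≤ S ^ p := Real.rpow_nonneg hS0 p
  set M' : ℝ := max M 0 with hM'
  set C : ℝ := (J.card : ℝ) * M' ^ p with hC
  have hC0 : 0 ≤ C := by positivity
  have h2p : (1:ℝ) < (2:ℝ) ^ p := Real.one_lt_rpow_iff_of_pos (by norm_num) |>.mpr
    (Or.inl ⟨by norm_num, hp⟩)
  -- geometric bound
  have hgeom : ∀ N : ℕ, ∑ k ∈ Finset.range N, y ^ (k+1) ≤ ((2:ℝ) ^ p - 1)⁻¹ := by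
    intro N
    have hsum : ∑ k ∈ Finset.range N, y ^ (k+1) = y * ∑ k ∈ Finset.range N, y ^ k := by
      rw [Finset.mul_sum]
      exact Finset.sum_congr rfl fun k _ => by ring
    have hg : ∑ k ∈ Finset.range N, y ^ k ≤ (1 - y)⁻¹ := by
      have hne : y ≠ 1 := hy1.ne
      rw [geom_sum_eq hne, ← neg_div_neg_eq, neg_sub, neg_sub, inv_eq_one_div]
      exact div_le_div₀ (by norm_num) (by nlinarith [pow_nonneg hy0.le N])
        (by linarith) le_rfl
    have hyinv : y = ((2:ℝ) ^ p)⁻¹ := by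
      rw [hy, ← Real.inv_rpow (by norm_num : (0:ℝ) ≤ 2)]
    have hkey : y * (1 - y)⁻¹ = ((2:ℝ) ^ p - 1)⁻¹ := by
      rw [hyinv]
      have h2pne : (2:ℝ) ^ p ≠ 0 := by positivity
      field_simp
    calc ∑ k ∈ Finset.range N, y ^ (k+1) = y * ∑ k ∈ Finset.range N, y ^ k := hsum
      _ ≤ y * (1 - y)⁻¹ := by
          exact mul_le_mul_of_nonneg_left hg hy0.le
      _ = ((2:ℝ) ^ p - 1)⁻¹ := hkey
  have key : ∀ N : ℕ, q (∑ n ∈ J, ((b n : ℝ) : 𝕜) • e n) ^ p ≤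
      (∑ k ∈ Finset.range N, y ^ (k+1)) * S ^ p + y ^ N * C := by
    intro N
    have hdec : ∑ n ∈ J, ((b n : ℝ) : 𝕜) • e n =
        (∑ k ∈ Finset.range N, (((2:ℝ)⁻¹ ^ (k+1) : ℝ) : 𝕜) •
          ∑ n ∈ J.filter (fun n => (2:ℝ)⁻¹ ^ (k+1) ≤ brem (b n) k), e n)
        + ∑ n ∈ J, ((brem (b n) N : ℝ) : 𝕜) • e n := by
      have h2 : ∀ k ∈ Finset.range N, (((2:ℝ)⁻¹ ^ (k+1) : ℝ) : 𝕜) •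
            (∑ n ∈ J.filter (fun n => (2:ℝ)⁻¹ ^ (k+1) ≤ brem (b n) k), e n)
          = ∑ n ∈ J, (((if (2:ℝ)⁻¹ ^ (k+1) ≤ brem (b n) k
              then ((2:ℝ)⁻¹ ^ (k+1)) else 0) : ℝ) : 𝕜) • e n := by
        intro k _
        rw [Finset.smul_sum, Finset.sum_filter]
        refine Finset.sum_congr rfl fun n _ => ?_
        split_ifs with h <;> simp
      rw [Finset.sum_congr rfl h2, Finset.sum_comm, ← Finset.sum_add_distrib]
      refine Finset.sum_congr rfl fun n _ => ?_
      rw [← Finset.sum_smul, ← add_smul]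
      congr 1
      rw [← RCLike.ofReal_sum, ← RCLike.ofReal_add, ← brem_sum]
    rw [hdec]
    refine (hq.ptri _ _).trans ?_
    refine le_trans (add_le_add (hq.psum' hp _ _) (hq.psum' hp _ _)) ?_
    have hterm1 : ∀ k ∈ Finset.range N,
        q ((((2:ℝ)⁻¹ ^ (k+1) : ℝ) : 𝕜) •
          ∑ n ∈ J.filter (fun n => (2:ℝ)⁻¹ ^ (k+1) ≤ brem (b n) k), e n) ^ p
        ≤ y ^ (k+1) * S ^ p := by
      intro k _
      rw [hq.hom, RCLike.norm_ofReal, abs_of_nonneg (by positivity),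
        Real.mul_rpow (by positivity) (hq.nonneg' _), half_pow_rpow]
      exact mul_le_mul_of_nonneg_left
        (Real.rpow_le_rpow (hq.nonneg' _) (hS _ (Finset.filter_subset _ _)) hp.le)
        (pow_nonneg hy0.le _)
    have hterm2 : ∀ n ∈ J, q (((brem (b n) N : ℝ) : 𝕜) • e n) ^ p ≤ y ^ N * M' ^ p := by
      intro n hn
      obtain ⟨hr0, hr1⟩ := brem_bounds (hb0 n hn) (hb1 n hn) N
      rw [hq.hom, RCLike.norm_ofReal, abs_of_nonneg hr0,
        Real.mul_rpow hr0 (hq.nonneg' _)]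
      have h1 : brem (b n) N ^ p ≤ y ^ N := by
        rw [← half_pow_rpow]
        exact Real.rpow_le_rpow hr0 hr1 hp.le
      have h2 : q (e n) ^ p ≤ M' ^ p :=
        Real.rpow_le_rpow (hq.nonneg' _) ((hM n).trans (le_max_left _ _)) hp.le
      exact mul_le_mul h1 h2 (Real.rpow_nonneg (hq.nonneg' _) p) (pow_nonneg hy0.le _)
    refine le_trans (add_le_add (Finset.sum_le_sum hterm1) (Finset.sum_le_sum hterm2)) ?_
    rw [← Finset.sum_mul, Finset.sum_const, nsmul_eq_mul, hC]
    exact le_of_eq (by ring)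
  have key2 : ∀ N : ℕ, q (∑ n ∈ J, ((b n : ℝ) : 𝕜) • e n) ^ p ≤
      ((2:ℝ) ^ p - 1)⁻¹ * S ^ p + y ^ N * C := fun N =>
    (key N).trans (add_le_add (mul_le_mul_of_nonneg_right (hgeom N) hSp) le_rfl)
  have ht : Filter.Tendsto (fun N : ℕ => ((2:ℝ) ^ p - 1)⁻¹ * S ^ p + y ^ N * C) Filter.atTop
      (nhds (((2:ℝ) ^ p - 1)⁻¹ * S ^ p + 0 * C)) :=
    tendsto_const_nhds.add ((tendsto_pow_atTop_nhds_zero_of_lt_one hy0.le hy1).mul_const C)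
  have := ge_of_tendsto' ht key2
  simpa using this


lemma final_step {p qf S m : ℝ} (hp : 0 < p) (hqf : 0 ≤ qf) (hS : 0 ≤ S) (hm : 0 ≤ m)
    (h2p : 1 < (2:ℝ) ^ p)
    (h : qf ^ p ≤ m * (((2:ℝ) ^ p - 1)⁻¹ * S ^ p)) :
    qf ≤ m ^ (1/p) * Ap p * S := by
  have h21 : (0:ℝ) < (2:ℝ) ^ p - 1 := by linarith
  have := Real.rpow_le_rpow (Real.rpow_nonneg hqf p) h (by positivity : (0:ℝ) ≤ 1/p)
  rw [one_div, Real.rpow_rpow_inv hqf hp.ne'] at this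
  refine this.trans (le_of_eq ?_)
  rw [Real.mul_rpow hm (by positivity), Real.mul_rpow (by positivity) (Real.rpow_nonneg hS p),
    Real.rpow_rpow_inv hS hp.ne', Real.inv_rpow h21.le, ← Real.rpow_neg h21.le,
    Ap, neg_div, one_div, mul_assoc]


/-- in a `p`-Banach space,
`‖∑_{n∈J} a_n e_n‖ ≤ B_p sup_{A ⊆ J} ‖∑_{n∈A} e_n‖` when `|a_n| ≤ 1`. -/
theorem stmt18 (p : ℝ) (hp : 0 < p) (hp1 : p ≤ 1)
    (hq : IsPNorm 𝕜 p q) (hb : IsBasis q e c)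
    (J : Finset ℕ) (a : ℕ → 𝕜) (ha : ∀ n ∈ J, ‖a n‖ ≤ 1) :
    q (∑ n ∈ J, a n • e n) ≤
      Bp 𝕜 p * sSup {r : ℝ | ∃ A ⊆ J, r = q (∑ n ∈ A, e n)} := by
  classical
  obtain ⟨M, hM⟩ := hb.semin
  have hMe : ∀ n, q (e n) ≤ M := fun n => (hM n).1
  have h2p : (1:ℝ) < (2:ℝ) ^ p := Real.one_lt_rpow_iff_of_pos (by norm_num) |>.mpr
    (Or.inl ⟨by norm_num, hp⟩)
  set S := sSup {r : ℝ | ∃ A ⊆ J, r = q (∑ n ∈ A, e n)} with hSdef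
  have hbdd : BddAbove {r : ℝ | ∃ A ⊆ J, r = q (∑ n ∈ A, e n)} := by
    have hst : {r : ℝ | ∃ A ⊆ J, r = q (∑ n ∈ A, e n)}
        = (fun A : Finset ℕ => q (∑ n ∈ A, e n)) '' ↑J.powerset := by
      ext r
      constructor
      · rintro ⟨A, hA, rfl⟩
        exact ⟨A, by simpa [Finset.mem_powerset] using hA, rfl⟩
      · rintro ⟨A, hA, rfl⟩
        exact ⟨A, by simpa [Finset.mem_powerset] using hA, rfl⟩
    rw [hst]
    exact (J.powerset.finite_toSet.image _).bddAbove
  have hS : ∀ A ⊆ J, q (∑ n ∈ A, e n) ≤ S := fun A hA => le_csSup hbdd ⟨A, hA, rfl⟩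
  have hS0 : 0 ≤ S := by
    have := hS ∅ (Finset.empty_subset J)
    simpa [hq.zero' (𝕜 := 𝕜)] using this
  set b1 : ℕ → ℝ := fun n => max (RCLike.re (a n)) 0 with hb1d
  set b2 : ℕ → ℝ := fun n => max (-(RCLike.re (a n))) 0 with hb2d
  set b3 : ℕ → ℝ := fun n => max (RCLike.im (a n)) 0 with hb3d
  set b4 : ℕ → ℝ := fun n => max (-(RCLike.im (a n))) 0 with hb4d
  have hbd : ∀ n ∈ J, |RCLike.re (a n)| ≤ 1 ∧ |RCLike.im (a n)| ≤ 1 := fun n hn =>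
    ⟨(RCLike.abs_re_le_norm _).trans (ha n hn), (RCLike.abs_im_le_norm _).trans (ha n hn)⟩
  have H1 : q (∑ n ∈ J, ((b1 n : ℝ) : 𝕜) • e n) ^ p ≤ ((2:ℝ) ^ p - 1)⁻¹ * S ^ p :=
    core_estimate hp hq M hMe J b1 (fun n _ => le_max_right _ _)
      (fun n hn => max_le ((le_abs_self _).trans (hbd n hn).1) zero_le_one) hS
  have H2 : q (∑ n ∈ J, ((b2 n : ℝ) : 𝕜) • e n) ^ p ≤ ((2:ℝ) ^ p - 1)⁻¹ * S ^ p :=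
    core_estimate hp hq M hMe J b2 (fun n _ => le_max_right _ _)
      (fun n hn => max_le ((neg_le_abs _).trans (hbd n hn).1) zero_le_one) hS
  have H3 : q (∑ n ∈ J, ((b3 n : ℝ) : 𝕜) • e n) ^ p ≤ ((2:ℝ) ^ p - 1)⁻¹ * S ^ p :=
    core_estimate hp hq M hMe J b3 (fun n _ => le_max_right _ _)
      (fun n hn => max_le ((le_abs_self _).trans (hbd n hn).2) zero_le_one) hS
  have H4 : q (∑ n ∈ J, ((b4 n : ℝ) : 𝕜) • e n) ^ p ≤ ((2:ℝ) ^ p - 1)⁻¹ * S ^ p :=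
    core_estimate hp hq M hMe J b4 (fun n _ => le_max_right _ _)
      (fun n hn => max_le ((neg_le_abs _).trans (hbd n hn).2) zero_le_one) hS
  have hsplit : ∑ n ∈ J, a n • e n =
      ((∑ n ∈ J, ((b1 n : ℝ) : 𝕜) • e n) - ∑ n ∈ J, ((b2 n : ℝ) : 𝕜) • e n)
      + (RCLike.I : 𝕜) • ((∑ n ∈ J, ((b3 n : ℝ) : 𝕜) • e n) - ∑ n ∈ J, ((b4 n : ℝ) : 𝕜) • e n) := by
    rw [smul_sub, Finset.smul_sum, Finset.smul_sum, ← Finset.sum_sub_distrib,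
      ← Finset.sum_sub_distrib, ← Finset.sum_add_distrib]
    refine Finset.sum_congr rfl fun n _ => ?_
    have e1 : ((RCLike.re (a n) : ℝ) : 𝕜) = ((b1 n : ℝ) : 𝕜) - ((b2 n : ℝ) : 𝕜) := by
      rw [← RCLike.ofReal_sub]
      norm_cast
      exact (max_zero_sub_max_neg_zero_eq_self _).symm
    have e2 : ((RCLike.im (a n) : ℝ) : 𝕜) = ((b3 n : ℝ) : 𝕜) - ((b4 n : ℝ) : 𝕜) := by
      rw [← RCLike.ofReal_sub]
      norm_cast
      exact (max_zero_sub_max_neg_zero_eq_self _).symm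
    have ha' : a n = (((b1 n : ℝ) : 𝕜) - ((b2 n : ℝ) : 𝕜))
        + (RCLike.I : 𝕜) * (((b3 n : ℝ) : 𝕜) - ((b4 n : ℝ) : 𝕜)) := by
      have h0 := RCLike.re_add_im (a n)
      rw [e1, e2] at h0
      linear_combination -h0
    rw [ha', add_smul, sub_smul, mul_smul, sub_smul, smul_sub]
  have hneg2 : q (-(∑ n ∈ J, ((b2 n : ℝ) : 𝕜) • e n)) = q (∑ n ∈ J, ((b2 n : ℝ) : 𝕜) • e n) := by
    have := hq.hom (-1 : 𝕜) (∑ n ∈ J, ((b2 n : ℝ) : 𝕜) • e n)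
    simpa using this
  have hneg4 : q (-(∑ n ∈ J, ((b4 n : ℝ) : 𝕜) • e n)) = q (∑ n ∈ J, ((b4 n : ℝ) : 𝕜) • e n) := by
    have := hq.hom (-1 : 𝕜) (∑ n ∈ J, ((b4 n : ℝ) : 𝕜) • e n)
    simpa using this
  have hsub12 : q ((∑ n ∈ J, ((b1 n : ℝ) : 𝕜) • e n) - ∑ n ∈ J, ((b2 n : ℝ) : 𝕜) • e n) ^ p
      ≤ 2 * (((2:ℝ) ^ p - 1)⁻¹ * S ^ p) := by
    rw [sub_eq_add_neg]
    refine (hq.ptri _ _).trans ?_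
    rw [hneg2]
    linarith
  have hsub34 : q ((∑ n ∈ J, ((b3 n : ℝ) : 𝕜) • e n) - ∑ n ∈ J, ((b4 n : ℝ) : 𝕜) • e n) ^ p
      ≤ 2 * (((2:ℝ) ^ p - 1)⁻¹ * S ^ p) := by
    rw [sub_eq_add_neg]
    refine (hq.ptri _ _).trans ?_
    rw [hneg4]
    linarith
  rcases eq_or_ne (RCLike.I : 𝕜) 0 with hI | hI
  · have heq : ∑ n ∈ J, a n • e n =
        (∑ n ∈ J, ((b1 n : ℝ) : 𝕜) • e n) - ∑ n ∈ J, ((b2 n : ℝ) : 𝕜) • e n := by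
      rw [hsplit, hI, zero_smul, add_zero]
    rw [Bp, if_pos hI, heq]
    exact final_step hp (hq.nonneg' _) hS0 (by norm_num) h2p hsub12
  · have hI1 : ‖(RCLike.I : 𝕜)‖ = 1 := RCLike.norm_I_of_ne_zero hI
    have hqt : q (∑ n ∈ J, a n • e n) ^ p ≤ 4 * (((2:ℝ) ^ p - 1)⁻¹ * S ^ p) := by
      rw [hsplit]
      refine (hq.ptri _ _).trans ?_
      rw [hq.hom, hI1, one_mul]
      linarith
    rw [Bp, if_neg hI]
    exact final_step hp (hq.nonneg' _) hS0 (by norm_num) h2p hqt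


end GreedyQB
end
end
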